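/- arXiv:2310.03650 — 14 statements merged into one kernel-verified Lean document; each statement's English description precedes it below -/
import Mathlib

section
/- In a two-agent, three-commodity (CO2, coal, electricity) economy where both agents have consumption set {0}×R≥0², endowment (0,1,0), and utility u_v(c1,c2,c3)=c3−v²/2 given total net CO2 emission v; the single private firm has production set Y={(r,−r,r): r≥0}; the government firm holds the entire quota −m with m∈(−2,0) and its profits are split equally; then at any quota equilibrium the private firm produces (−m,m,−m), the equilibrium price is (−1/2,0,1/2), and each agent consumes −m/2 units of electricity. -/
noncomputable section

/-- Dot product on ℝ³ (as nested pairs). -/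
def dot3 (p z : ℝ × ℝ × ℝ) : ℝ := p.1 * z.1 + p.2.1 * z.2.1 + p.2.2 * z.2.2

/-- Common consumption set {0} × ℝ≥0². -/
def X0 : Set (ℝ × ℝ × ℝ) := {z | z.1 = 0 ∧ 0 ≤ z.2.1 ∧ 0 ≤ z.2.2}

/-- Common endowment (0,1,0). -/
def e0 : ℝ × ℝ × ℝ := (0, 1, 0)

/-- Private firm: burn r units of coal to get r units of electricity, emitting r units of CO2. -/
def Yfirm : Set (ℝ × ℝ × ℝ) := {y | ∃ r : ℝ, 0 ≤ r ∧ y = (r, -r, r)}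

set_option maxHeartbeats 1600000 in
/-- global quota allocation (all quota to government firm, profits split
equally).  At any quota equilibrium the private firm produces (−m,m,−m), the price is
(−1/2,0,1/2) and each agent consumes −m/2 units of electricity. -/
theorem stmt0 (m : ℝ) (hm : m ∈ Set.Ioo (-2 : ℝ) 0)
    (x1 x2 y p : ℝ × ℝ × ℝ)
    -- price in the simplex Δ
    (hp : |p.1| + |p.2.1| + |p.2.2| = 1)
    -- firm profit maximization
    (hy : y ∈ Yfirm)
    (hymax : ∀ z ∈ Yfirm, dot3 p z ≤ dot3 p y)
    -- agent 1 owns the private firm fully (quota 0) and half of the government firm (quota m)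
    (hx1X : x1 ∈ X0)
    (hx1b : dot3 p x1 ≤ dot3 p e0 + dot3 p y + (1/2) * (p.1 * m))
    (hx1opt : ∀ z ∈ X0, dot3 p z ≤ dot3 p e0 + dot3 p y + (1/2) * (p.1 * m) →
        z.2.2 ≤ x1.2.2)
    -- agent 2 owns half of the government firm only
    (hx2X : x2 ∈ X0)
    (hx2b : dot3 p x2 ≤ dot3 p e0 + (1/2) * (p.1 * m))
    (hx2opt : ∀ z ∈ X0, dot3 p z ≤ dot3 p e0 + (1/2) * (p.1 * m) → z.2.2 ≤ x2.2.2)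
    -- compliance: excess demand lies in Z(m) = {m} × ℝ≤0 × {0}
    (hc1 : x1.1 + x2.1 - e0.1 - e0.1 - y.1 = m)
    (hc2 : x1.2.1 + x2.2.1 - e0.2.1 - e0.2.1 - y.2.1 ≤ 0)
    (hc3 : x1.2.2 + x2.2.2 - e0.2.2 - e0.2.2 - y.2.2 = 0) :
    y = (-m, m, -m) ∧ p = (-(1/2), 0, 1/2) ∧ x1.2.2 = -m/2 ∧ x2.2.2 = -m/2 := by
  obtain ⟨hm1, hm2⟩ := hm
  obtain ⟨r, hr, hyr⟩ := hy
  obtain ⟨p1, p2, p3⟩ := p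
  obtain ⟨a1, b1, c1⟩ := x1
  obtain ⟨a2, b2, c2⟩ := x2
  subst hyr
  simp only [X0, Set.mem_setOf_eq] at hx1X hx2X
  obtain ⟨h1a, h1b, h1c⟩ := hx1X
  obtain ⟨h2a, h2b, h2c⟩ := hx2X
  simp only [dot3, e0] at hc1 hc2 hc3 hx1b hx2b hymax hx1opt hx2opt
  subst h1a; subst h2a
  -- r = -m
  have hrm : r = -m := by linarith
  subst hrm
  -- zero profit: p1 - p2 + p3 = 0
  have hs : p1 - p2 + p3 = 0 := by
    have h0 := hymax (0, -0, 0) ⟨0, le_refl 0, by norm_num⟩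
    have h2 := hymax (2*(-m), -(2*(-m)), 2*(-m)) ⟨2*(-m), by linarith, rfl⟩
    simp only [dot3] at h0 h2
    nlinarith
  -- p3 > 0
  have hp3 : 0 < p3 := by
    by_contra h
    push_neg at h
    have h2 := hx1opt (0, b1, c1 + 1) ⟨rfl, h1b, by simp; linarith⟩
      (by simp only [dot3]; nlinarith)
    have h3 : c1 + 1 ≤ c1 := h2
    linarith
  -- p2 ≥ 0
  have hp2 : 0 ≤ p2 := by
    by_contra h
    push_neg at h
    have hfrac : 0 < (-p2)/p3 := div_pos (by linarith) hp3
    have hb : p1 * 0 + p2 * (b1 + 1) + p3 * (c1 + (-p2)/p3)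
        = p1 * 0 + p2 * b1 + p3 * c1 := by
      field_simp; ring
    have h2 := hx1opt (0, b1 + 1, c1 + (-p2)/p3)
      ⟨rfl, by simp; linarith, by simp; linarith⟩
      (by simp only [dot3]; rw [hb]; linarith)
    have h3 : c1 + (-p2)/p3 ≤ c1 := h2
    linarith
  -- wealth
  obtain ⟨w, hwd⟩ : ∃ w : ℝ, w = p2 + 1 / 2 * (p1 * m) := ⟨_, rfl⟩
  have hye : p1 * (-m) + p2 * (- -m) + p3 * (-m) = 0 := by nlinarith
  have hw1 : p1 * 0 + p2 * b1 + p3 * c1 ≤ w := by rw [hwd]; linarith [hx1b, hye]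
  have hw2 : p1 * 0 + p2 * b2 + p3 * c2 ≤ w := by rw [hwd]; linarith [hx2b]
  have hwpos : 0 ≤ w := by
    linarith [hw2, mul_nonneg hp2 h2b, mul_nonneg hp3.le h2c]
  have hupper1 : p3 * c1 ≤ w := by linarith [hw1, mul_nonneg hp2 h1b]
  have hupper2 : p3 * c2 ≤ w := by linarith [hw2, mul_nonneg hp2 h2b]
  have hdz : p3 * (w / p3) = w := by field_simp
  have hlow1 : w / p3 ≤ c1 := by
    have h2 := hx1opt (0, 0, w/p3) ⟨rfl, le_refl 0, div_nonneg hwpos hp3.le⟩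
      (by simp only [dot3]; rw [mul_zero, mul_zero, hdz, hwd]; linarith [hye])
    exact h2
  have hlow2 : w / p3 ≤ c2 := by
    have h2 := hx2opt (0, 0, w/p3) ⟨rfl, le_refl 0, div_nonneg hwpos hp3.le⟩
      (by simp only [dot3]; rw [mul_zero, mul_zero, hdz, hwd]; linarith)
    exact h2
  have hx1e : c1 = w / p3 := by
    have h1 : c1 ≤ w / p3 := (le_div_iff₀ hp3).mpr (by linarith)
    linarith
  have hx2e : c2 = w / p3 := by
    have h1 : c2 ≤ w / p3 := (le_div_iff₀ hp3).mpr (by linarith)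
    linarith
  -- market clearing for electricity
  have hmc : c1 + c2 = -m := by linarith
  have h2w : 2 * w = -m * p3 := by
    rw [hx1e, hx2e] at hmc
    field_simp at hmc; linarith
  -- p2 = 0
  have hp20 : p2 = 0 := by
    have hp1e : p1 * m = p2 * m - p3 * m := by
      rw [show p1 = p2 - p3 by linarith]; ring
    have key : p2 * (2 + m) = 0 := by
      rw [hwd] at h2w; linear_combination h2w - hp1e
    have hpos : (0:ℝ) < 2 + m := by linarith
    rcases mul_eq_zero.mp key with h | h
    · exact h
    · linarith
  have hp1n : p1 = -p3 := by linarith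
  have hp3v : p3 = 1/2 := by
    simp only [hp1n, hp20] at hp
    rw [abs_neg, abs_of_pos hp3] at hp
    simp at hp; linarith
  have hp1v : p1 = -(1/2) := by rw [hp1n, hp3v]
  have hwv : w = -m/4 := by rw [hwd, hp20, hp1v]; ring
  have hval : w / p3 = -m/2 := by rw [hwv, hp3v]; ring
  exact ⟨by norm_num, by rw [hp1v, hp20, hp3v],
    by simp only []; rw [hx1e, hval], by simp only []; rw [hx2e, hval]⟩
end
end

section
/- In the same two-agent economy with m∈(−2,0), if instead the entire quota is allocated to the private firm (m^{(0)}=0, m^{(1)}=m; cap and trade), then at any quota equilibrium the private firm produces (−m,m,−m), the equilibrium price is (−1/2,0,1/2), agent 1 (who owns the private firm) consumes −m units of electricity, and agent 2 consumes 0 units of electricity. -/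
noncomputable section

/-- cap and trade allocation (all quota to the private firm, which is owned
by agent 1).  At any quota equilibrium the private firm produces (−m,m,−m), the price is
(−1/2,0,1/2), agent 1 consumes −m units of electricity and agent 2 consumes 0. -/
theorem stmt1 (m : ℝ) (hm : m ∈ Set.Ioo (-2 : ℝ) 0)
    (x1 x2 y p : ℝ × ℝ × ℝ)
    (hp : |p.1| + |p.2.1| + |p.2.2| = 1)
    (hy : y ∈ Yfirm)
    (hymax : ∀ z ∈ Yfirm, dot3 p z ≤ dot3 p y)
    -- agent 1 owns the private firm fully; its profit includes quota revenue p1·m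
    (hx1X : x1 ∈ X0)
    (hx1b : dot3 p x1 ≤ dot3 p e0 + (dot3 p y + p.1 * m))
    (hx1opt : ∀ z ∈ X0, dot3 p z ≤ dot3 p e0 + (dot3 p y + p.1 * m) → z.2.2 ≤ x1.2.2)
    -- agent 2 has no shareholdings beyond her endowment
    (hx2X : x2 ∈ X0)
    (hx2b : dot3 p x2 ≤ dot3 p e0)
    (hx2opt : ∀ z ∈ X0, dot3 p z ≤ dot3 p e0 → z.2.2 ≤ x2.2.2)
    -- compliance: excess demand lies in Z(m) = {m} × ℝ≤0 × {0}
    (hc1 : x1.1 + x2.1 - e0.1 - e0.1 - y.1 = m)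
    (hc2 : x1.2.1 + x2.2.1 - e0.2.1 - e0.2.1 - y.2.1 ≤ 0)
    (hc3 : x1.2.2 + x2.2.2 - e0.2.2 - e0.2.2 - y.2.2 = 0) :
    y = (-m, m, -m) ∧ p = (-(1/2), 0, 1/2) ∧ x1.2.2 = -m ∧ x2.2.2 = 0 := by
  obtain ⟨hm1, hm2⟩ := hm
  obtain ⟨r, hr, hyr⟩ := hy
  obtain ⟨h11, h12, h13⟩ := hx1X
  obtain ⟨h21, h22, h23⟩ := hx2X
  subst hyr
  simp only [dot3, e0] at hx1b hx1opt hx2b hx2opt hc1 hc2 hc3 ⊢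
  -- step 1: r = -m, i.e. y = (-m, m, -m)
  have hrm : r = -m := by simp [h11, h21] at hc1; linarith
  subst hrm
  have hy' : ((-m : ℝ), -(-m), -m) = ((-m : ℝ), m, -m) := by norm_num
  -- step 2: zero-profit condition p1 - p2 + p3 = 0
  have hs : p.1 - p.2.1 + p.2.2 = 0 := by
    have h0 := hymax (0, 0, 0) ⟨0, le_refl 0, by norm_num⟩
    have h2 := hymax (-(2*m), -(-(2*m)), -(2*m)) ⟨-(2*m), by linarith, rfl⟩
    simp only [dot3] at h0 h2
    have hms : m * p.1 - m * p.2.1 + m * p.2.2 = 0 := by linarith only [h0, h2]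
    have := mul_left_cancel₀ (ne_of_lt hm2)
      (by linear_combination hms : m * (p.1 - p.2.1 + p.2.2) = m * 0)
    linarith only [this]
  -- step 3: p3 > 0
  have hp3 : 0 < p.2.2 := by
    by_contra h
    push_neg at h
    have hz := hx2opt (0, x2.2.1, x2.2.2 + 1)
      ⟨rfl, h22, by show (0:ℝ) ≤ x2.2.2 + 1; linarith⟩ ?_
    · simp at hz; linarith
    · show p.1 * 0 + p.2.1 * x2.2.1 + p.2.2 * (x2.2.2 + 1) ≤ _
      rw [h21] at hx2b
      linarith only [hx2b, h]
  -- step 4: p2 ≥ 0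
  have hp2 : 0 ≤ p.2.1 := by
    by_contra h
    push_neg at h
    set N := max 0 ((p.2.1 - p.2.2 * (x2.2.2 + 1)) / p.2.1) with hN
    have hN1 : (0 : ℝ) ≤ N := le_max_left _ _
    have hN2 : p.2.1 * N ≤ p.2.1 - p.2.2 * (x2.2.2 + 1) := by
      have h1 : (p.2.1 - p.2.2 * (x2.2.2 + 1)) / p.2.1 ≤ N := le_max_right _ _
      have h2 : p.2.1 * N ≤ p.2.1 * ((p.2.1 - p.2.2 * (x2.2.2 + 1)) / p.2.1) := by
        apply mul_le_mul_of_nonpos_left h1 h.le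
      rwa [mul_div_cancel₀ _ (ne_of_lt h)] at h2
    have hz := hx2opt (0, N, x2.2.2 + 1)
      ⟨rfl, hN1, by show (0:ℝ) ≤ x2.2.2 + 1; linarith⟩ ?_
    · simp at hz; linarith
    · show p.1 * 0 + p.2.1 * N + p.2.2 * (x2.2.2 + 1) ≤ _
      linarith [hN2]
  -- step 5: exact electricity demands; agent 2
  have hb2 : p.2.1 * x2.2.1 + p.2.2 * x2.2.2 ≤ p.2.1 := by
    rw [h21] at hx2b; linarith only [hx2b]
  have hlow2 : p.2.1 ≤ p.2.2 * x2.2.2 := by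
    have hz := hx2opt (0, 0, p.2.1 / p.2.2)
      ⟨rfl, le_refl 0, div_nonneg hp2 hp3.le⟩ ?_
    · have h4 : p.2.2 * (p.2.1 / p.2.2) ≤ p.2.2 * x2.2.2 := by
        apply mul_le_mul_of_nonneg_left _ hp3.le
        simpa using hz
      rwa [mul_div_cancel₀ _ (ne_of_gt hp3)] at h4
    · show p.1 * 0 + p.2.1 * 0 + p.2.2 * (p.2.1 / p.2.2) ≤ _
      rw [mul_div_cancel₀ _ (ne_of_gt hp3)]; linarith
  have e2 : p.2.2 * x2.2.2 = p.2.1 := by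
    linarith only [hb2, hlow2, mul_nonneg hp2 h22]
  -- agent 1
  have hprof : p.1 * (-m) + p.2.1 * (-(-m)) + p.2.2 * (-m) = 0 := by
    linear_combination (-m) * hs
  have hb1 : p.2.1 * x1.2.1 + p.2.2 * x1.2.2 ≤ p.2.1 + p.1 * m := by
    rw [h11] at hx1b; linarith only [hx1b, hprof]
  have hw1 : (0:ℝ) ≤ p.2.1 + p.1 * m := by
    linarith only [mul_nonneg hp2 h12, mul_nonneg hp3.le h13, hb1]
  have hlow1 : p.2.1 + p.1 * m ≤ p.2.2 * x1.2.2 := by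
    have hz := hx1opt (0, 0, (p.2.1 + p.1 * m) / p.2.2)
      ⟨rfl, le_refl 0, div_nonneg hw1 hp3.le⟩ ?_
    · have h4 : p.2.2 * ((p.2.1 + p.1 * m) / p.2.2) ≤ p.2.2 * x1.2.2 := by
        apply mul_le_mul_of_nonneg_left _ hp3.le
        simpa using hz
      rwa [mul_div_cancel₀ _ (ne_of_gt hp3)] at h4
    · show p.1 * 0 + p.2.1 * 0 + p.2.2 * ((p.2.1 + p.1 * m) / p.2.2) ≤ _
      rw [mul_div_cancel₀ _ (ne_of_gt hp3)]
      linarith only [hprof]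
  have e1 : p.2.2 * x1.2.2 = p.2.1 + p.1 * m := by
    linarith only [hb1, hlow1, mul_nonneg hp2 h12]
  -- step 6: p2 = 0
  have hsum : x1.2.2 + x2.2.2 = -m := by linarith only [hc3]
  have key : p.2.1 * (2 + m) = 0 := by
    linear_combination (-1) * e1 + (-1) * e2 + p.2.2 * hsum + (-m) * hs
  have hp2z : p.2.1 = 0 := by
    rcases mul_eq_zero.mp key with h | h
    · exact h
    · linarith
  -- step 7: normalization gives p3 = 1/2
  have hp1 : p.1 = -p.2.2 := by rw [hp2z] at hs; linarith
  have hp3v : p.2.2 = 1/2 := by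
    rw [hp1, hp2z, abs_of_pos hp3, abs_neg, abs_of_pos hp3] at hp
    simp at hp; linarith
  refine ⟨hy', ?_, ?_, ?_⟩
  · have hpe : p = (p.1, p.2.1, p.2.2) := rfl
    rw [hpe, hp1, hp2z, hp3v]
  · rw [hp1, hp2z, hp3v] at e1; linarith
  · rw [hp3v, hp2z] at e2; linarith
end
end

section
/- Let (x̄,ȳ,p̄) be a quota equilibrium of a finite production economy with quota E, where m^{(j)} are the firms' quotas and m=Σ_j m^{(j)}. Define a global quota economy F identical to E except all private firms' quotas are 0, the government firm's quota is −m, and each agent's share of the government firm is θ̃(ω)(0)=(Σ_j θ_{ωj} π_k(p̄)·m^{(j)})/(π_k(p̄)·m) (assuming π_k(p̄)·m ≠ 0). Then (x̄,ȳ,p̄) is a quota equilibrium for F. -/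
open Finset

noncomputable section

variable {Ω J C : Type*}

/-- Dot product of two commodity vectors. -/
def dotp [Fintype C] (p z : C → ℝ) : ℝ := ∑ i, p i * z i

/-- A finite production economy with quota: consumption sets, global preferences
(depending on the whole consumption allocation, production profile and price),
endowments, shareholdings, production sets, the set `R` of regulated commodities,
the firms' quotas `m` (the negative of the quota) and a flag `free` recording, for
non-regulated commodities, whether free disposal is allowed. -/
structure QuotaEconomy (Ω J C : Type*) where
  X : Ω → Set (C → ℝ)
  pref : Ω → (Ω → C → ℝ) → (J → C → ℝ) → (C → ℝ) → (C → ℝ) → (C → ℝ) → Prop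
  e : Ω → C → ℝ
  θ : Ω → J → ℝ
  Y : J → Set (C → ℝ)
  R : Finset C
  m : J → C → ℝ
  free : C → Prop

variable [Fintype Ω] [Fintype J] [Fintype C]

/-- Agent `ω`'s wealth: endowment value plus shares of firm profits, where each firm's
profit includes the revenue from its quota on the regulated commodities. -/
def QuotaEconomy.wealth (E : QuotaEconomy Ω J C) (p : C → ℝ) (y : J → C → ℝ) (ω : Ω) : ℝ :=
  dotp p (E.e ω) + ∑ j, E.θ ω j * (dotp p (y j) + ∑ i ∈ E.R, p i * E.m j i)

/-- Aggregate excess demand. -/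
def QuotaEconomy.excess (E : QuotaEconomy Ω J C) (x : Ω → C → ℝ) (y : J → C → ℝ) : C → ℝ :=
  fun i => ∑ ω, x ω i - ∑ ω, E.e ω i - ∑ j, y j i

/-- Quota compliance: consumptions and productions are admissible, excess demand of a
regulated commodity equals the total quota, and excess demand of a non-regulated
commodity is ≤ 0 when free disposal is allowed and = 0 otherwise. -/
def QuotaEconomy.Compliant (E : QuotaEconomy Ω J C) (x : Ω → C → ℝ) (y : J → C → ℝ) : Prop :=
  (∀ ω, x ω ∈ E.X ω) ∧ (∀ j, y j ∈ E.Y j) ∧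
  (∀ i ∈ E.R, E.excess x y i = ∑ j, E.m j i) ∧
  (∀ i ∉ E.R, E.excess x y i ≤ 0 ∧ (¬ E.free i → E.excess x y i = 0))

/-- Quota equilibrium: price on the simplex, compliance, profit maximization, and
demand optimality (strictly preferred bundles are unaffordable). -/
def QuotaEconomy.Equilibrium (E : QuotaEconomy Ω J C) (x : Ω → C → ℝ)
    (y : J → C → ℝ) (p : C → ℝ) : Prop :=
  (∑ i, |p i|) = 1 ∧
  E.Compliant x y ∧
  (∀ j, ∀ z ∈ E.Y j, dotp p z ≤ dotp p (y j)) ∧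
  (∀ ω, dotp p (x ω) ≤ E.wealth p y ω) ∧
  (∀ ω, ∀ z ∈ E.X ω, E.pref ω x y p z (x ω) → ¬ dotp p z ≤ E.wealth p y ω)

/-- every quota equilibrium of `E` is a global quota equilibrium of the
economy obtained by moving all quotas to the government firm `g` and giving agent `ω`
the share `(Σ_j θ_{ωj} π_k(pe)·m^{(j)})/(π_k(pe)·m)` of the government firm. -/
theorem stmt2 [DecidableEq J] (E : QuotaEconomy Ω J C) (g : J)
    (hg : E.Y g = ({0} : Set (C → ℝ)))
    (xe : Ω → C → ℝ) (ye : J → C → ℝ) (pe : C → ℝ)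
    (heq : E.Equilibrium xe ye pe)
    (hne : (∑ i ∈ E.R, pe i * ∑ j, E.m j i) ≠ 0) :
    QuotaEconomy.Equilibrium
      { E with
        m := fun j => if j = g then (fun i => ∑ j', E.m j' i) else (0 : C → ℝ)
        θ := fun ω j => if j = g
          then (∑ j', E.θ ω j' * ∑ i ∈ E.R, pe i * E.m j' i) /
                (∑ i ∈ E.R, pe i * ∑ j', E.m j' i)
          else E.θ ω j }
      xe ye pe := by
  obtain ⟨hp, ⟨hX, hY, hR, hNR⟩, hprof, hbud, hopt⟩ := heq
  have hyg : ye g = 0 := by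
    have := hY g; rw [hg] at this; exact this
  have hdg : dotp pe (ye g) = 0 := by simp [hyg, dotp]
  have hw : ∀ ω, QuotaEconomy.wealth
      { E with
        m := fun j => if j = g then (fun i => ∑ j', E.m j' i) else (0 : C → ℝ)
        θ := fun ω j => if j = g
          then (∑ j', E.θ ω j' * ∑ i ∈ E.R, pe i * E.m j' i) /
                (∑ i ∈ E.R, pe i * ∑ j', E.m j' i)
          else E.θ ω j } pe ye ω = E.wealth pe ye ω := by
    intro ω
    simp only [QuotaEconomy.wealth]
    congr 1
    rw [← Finset.add_sum_erase Finset.univ _ (Finset.mem_univ g),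
        ← Finset.add_sum_erase Finset.univ
          (fun j => E.θ ω j * (dotp pe (ye j) + ∑ i ∈ E.R, pe i * E.m j i))
          (Finset.mem_univ g)]
    have h1 : ∀ j ∈ Finset.univ.erase g,
        (if j = g
          then (∑ j', E.θ ω j' * ∑ i ∈ E.R, pe i * E.m j' i) /
                (∑ i ∈ E.R, pe i * ∑ j', E.m j' i)
          else E.θ ω j) *
          (dotp pe (ye j) + ∑ i ∈ E.R, pe i *
            (if j = g then (fun i => ∑ j', E.m j' i) else (0 : C → ℝ)) i)
        = E.θ ω j * dotp pe (ye j) := by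
      intro j hj
      have hjg : j ≠ g := Finset.ne_of_mem_erase hj
      simp [hjg]
    rw [Finset.sum_congr rfl h1]
    have h2 : ∀ j ∈ Finset.univ.erase g,
        E.θ ω j * (dotp pe (ye j) + ∑ i ∈ E.R, pe i * E.m j i)
        = E.θ ω j * dotp pe (ye j) + E.θ ω j * ∑ i ∈ E.R, pe i * E.m j i := by
      intro j _; ring
    rw [Finset.sum_congr rfl h2, Finset.sum_add_distrib]
    simp only [eq_self_iff_true, if_true, hdg, zero_add]
    rw [div_mul_cancel₀ _ hne]
    have h3 : (∑ j', E.θ ω j' * ∑ i ∈ E.R, pe i * E.m j' i)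
        = E.θ ω g * ∑ i ∈ E.R, pe i * E.m g i
          + ∑ j ∈ Finset.univ.erase g, E.θ ω j * ∑ i ∈ E.R, pe i * E.m j i := by
      exact (Finset.add_sum_erase Finset.univ _ (Finset.mem_univ g)).symm
    rw [h3]; ring
  refine ⟨hp, ⟨hX, hY, ?_, hNR⟩, hprof, ?_, ?_⟩
  · intro i hi
    have := hR i hi
    simpa [QuotaEconomy.excess, apply_ite (fun f : C → ℝ => f i), Finset.sum_ite_eq' Finset.univ g] using this
  · intro ω; rw [hw ω]; exact hbud ω
  · intro ω z hz hpref; rw [hw ω]; exact hopt ω z hz hpref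
end
end

section
/- Suppose there is a single regulated commodity (k=1). Let E be a finite production economy with quota with firm quotas m^{(j)}∈R≤0 and m=Σ_j m^{(j)}<0. Let F be the global quota economy with all private firm quotas 0, government firm quota −m, and government firm shares θ̃(ω)(0)=(Σ_j θ_{ωj} m^{(j)})/m. Then every quota equilibrium of E is a global quota equilibrium of F (with the correspondence of economies independent of the equilibrium price). -/
open Finset

noncomputable section

variable {Ω J C : Type*}

variable [Fintype Ω] [Fintype J] [Fintype C]

/-! With a single regulated commodity `c0`, agent `ω` receives quota revenue
`p c0 * ∑ j, θ ω j * m j c0`, so it depends on the quotas and shares only through the number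
`∑ j, θ ω j * m j c0`. Handing the whole quota to the government firm, which produces
nothing, with shares chosen to keep these numbers fixed therefore changes neither wealth nor
the total quota, and these are the only ways quotas and shares enter the equilibrium
conditions. -/

namespace QuotaEconomy

omit [Fintype Ω] in
theorem wealth_eq_of_R_eq_singleton (E : QuotaEconomy Ω J C) {c0 : C} (hR : E.R = {c0})
    (p : C → ℝ) (y : J → C → ℝ) (ω : Ω) :
    E.wealth p y ω = dotp p (E.e ω) + ∑ j, E.θ ω j * dotp p (y j)
      + p c0 * ∑ j, E.θ ω j * E.m j c0 := by
  simp only [wealth, hR, sum_singleton, mul_add, sum_add_distrib, mul_sum, add_assoc]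
  congr 2
  exact sum_congr rfl fun j _ => by ring

theorem Equilibrium.withQuotaShares {E : QuotaEconomy Ω J C} {x : Ω → C → ℝ}
    {y : J → C → ℝ} {p : C → ℝ} (h : E.Equilibrium x y p) (m' : J → C → ℝ)
    (θ' : Ω → J → ℝ) (hm : ∀ i ∈ E.R, ∑ j, m' j i = ∑ j, E.m j i)
    (hw : ∀ ω, ({ E with m := m', θ := θ' } : QuotaEconomy Ω J C).wealth p y ω
      = E.wealth p y ω) :
    ({ E with m := m', θ := θ' } : QuotaEconomy Ω J C).Equilibrium x y p := by
  obtain ⟨hp, ⟨hX, hY, hRq, hNR⟩, hprof, hbud, hopt⟩ := h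
  refine ⟨hp, ⟨hX, hY, fun i hi => (hRq i hi).trans (hm i hi).symm, hNR⟩, hprof,
    fun ω => (hw ω).symm ▸ hbud ω, fun ω z hz hpref => (hw ω).symm ▸ hopt ω z hz hpref⟩

end QuotaEconomy

theorem stmt3_general [DecidableEq J] (E : QuotaEconomy Ω J C) (g : J)
    (hg : E.Y g = ({0} : Set (C → ℝ)))
    (c0 : C) (hR : E.R = {c0})
    (hmtot : (∑ j, E.m j c0) < 0) :
    ∀ (xe : Ω → C → ℝ) (ye : J → C → ℝ) (pe : C → ℝ),
      E.Equilibrium xe ye pe →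
      QuotaEconomy.Equilibrium
        { E with
          m := fun j => if j = g then (fun i => ∑ j', E.m j' i) else (0 : C → ℝ)
          θ := fun ω j => if j = g
            then (∑ j', E.θ ω j' * E.m j' c0) / (∑ j', E.m j' c0)
            else E.θ ω j }
        xe ye pe := by
  intro x y p h
  have hyg : y g = 0 := by simpa [hg] using (h.2.1.2.1 g : y g ∈ E.Y g)
  refine h.withQuotaShares _ _ (fun i _ => by simp [apply_ite (fun f : C → ℝ => f i)]) fun ω => ?_
  refine (QuotaEconomy.wealth_eq_of_R_eq_singleton _ (c0 := c0) ?_ p y ω).trans ?_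
  · exact hR
  rw [E.wealth_eq_of_R_eq_singleton hR]
  congr 2
  · refine sum_congr rfl fun j _ => ?_
    by_cases hj : j = g <;> simp [hj, hyg, dotp]
  · rw [sum_eq_single g (fun j _ hj => by simp [hj]) (by simp)]
    simp [div_mul_cancel₀ _ hmtot.ne]

/-- with a single regulated commodity, every quota equilibrium of `E` is a
global quota equilibrium of the fixed economy `F` whose government firm `g` holds the
whole quota and whose government shares are `(Σ_j θ_{ωj} m^{(j)})/m`, a correspondence
independent of the equilibrium price. -/
theorem stmt3 [DecidableEq J] (E : QuotaEconomy Ω J C) (g : J)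
    (hg : E.Y g = ({0} : Set (C → ℝ)))
    (c0 : C) (hR : E.R = {c0})
    (hmneg : ∀ j, E.m j c0 ≤ 0) (hmtot : (∑ j, E.m j c0) < 0) :
    ∀ (xe : Ω → C → ℝ) (ye : J → C → ℝ) (pe : C → ℝ),
      E.Equilibrium xe ye pe →
      QuotaEconomy.Equilibrium
        { E with
          m := fun j => if j = g then (fun i => ∑ j', E.m j' i) else (0 : C → ℝ)
          θ := fun ω j => if j = g
            then (∑ j', E.θ ω j' * E.m j' c0) / (∑ j', E.m j' c0)
            else E.θ ω j }
        xe ye pe :=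
  stmt3_general E g hg c0 hR hmtot
end
end

section
/- Under the assumptions of the constrained welfare theorem, if additionally each agent's equilibrium preference relation is negatively transitive and locally non-satiated, then every quota equilibrium consumption-production pair is constrained Pareto optimal: no quota-compliant pair with the same total net emission Pareto dominates it (weakly better for all agents, strictly better for at least one). -/
open Finset

noncomputable section

variable {Ω J C : Type*}

variable [Fintype Ω] [Fintype J] [Fintype C]

/-- Total net emission of the regulated commodities,
`C(x,y) = π_k(Σ_ω e(ω) + Σ_j y(j) − Σ_ω x(ω))` (zero off the regulated coordinates). -/
def QuotaEconomy.emission [Fintype Ω] [Fintype J] [Fintype C] [DecidableEq C]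
    (E : QuotaEconomy Ω J C) (x : Ω → C → ℝ) (y : J → C → ℝ) : C → ℝ :=
  fun i => if i ∈ E.R then (∑ ω, E.e ω i + ∑ j, y j i - ∑ ω, x ω i) else 0

/-- constrained Pareto optimality: under the hypotheses of the constrained
welfare theorem, if each agent's preference at the equilibrium is negatively transitive
and locally non-satiated, then no quota-compliant pair with the same total net emission
Pareto dominates the equilibrium pair (weakly better for all agents, strictly better for
at least one). -/
theorem stmt5 [DecidableEq C] (E : QuotaEconomy Ω J C)
    (Pref : Ω → (C → ℝ) → (C → ℝ) → (C → ℝ) → (C → ℝ) → Prop)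
    (hext : ∀ ω x y p a b, E.pref ω x y p a b ↔ Pref ω a (E.emission x y) b (E.emission x y))
    (hfree : ∀ i ∉ E.R, ¬ E.free i)
    (xe : Ω → C → ℝ) (ye : J → C → ℝ) (pe : C → ℝ)
    (heq : E.Equilibrium xe ye pe)
    -- negative transitivity of the equilibrium preferences
    (hnt : ∀ ω a b c, E.pref ω xe ye pe a b →
        (E.pref ω xe ye pe a c ∨ E.pref ω xe ye pe c b))
    -- local non-satiation of the equilibrium preferences
    (hlns : ∀ ω, ∀ z ∈ E.X ω, ∀ ε : ℝ, 0 < ε →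
        ∃ w ∈ E.X ω, dist w z < ε ∧ E.pref ω xe ye pe w z) :
    ¬ ∃ (x' : Ω → C → ℝ) (y' : J → C → ℝ),
        E.Compliant x' y' ∧ E.emission x' y' = E.emission xe ye ∧
        (∀ ω, ¬ Pref ω (xe ω) (E.emission xe ye) (x' ω) (E.emission x' y')) ∧
        (∃ ω, Pref ω (x' ω) (E.emission x' y') (xe ω) (E.emission xe ye)) := by
  rintro ⟨x', y', hc', hem, hweak, ω0, hstrict⟩
  obtain ⟨hp1, hc, hprof, hbud, hopt⟩ := heq
  set W : Ω → ℝ := E.wealth pe ye with hW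
  -- Step 1: each agent's new consumption costs at least its wealth
  have key : ∀ ω, W ω ≤ dotp pe (x' ω) := by
    intro ω
    by_contra hlt
    push_neg at hlt
    obtain ⟨w, hwX, hwd, hwp⟩ :=
      hlns ω (x' ω) (hc'.1 ω) (W ω - dotp pe (x' ω)) (by linarith)
    have hbound : dotp pe w ≤ W ω := by
      have h1 : dotp pe w - dotp pe (x' ω) ≤ ∑ i, |pe i| * dist w (x' ω) := by
        rw [dotp, dotp, ← Finset.sum_sub_distrib]
        apply Finset.sum_le_sum
        intro i _
        have h2 : |w i - x' ω i| ≤ dist w (x' ω) := by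
          have := dist_le_pi_dist w (x' ω) i
          rwa [Real.dist_eq] at this
        calc pe i * w i - pe i * x' ω i = pe i * (w i - x' ω i) := by ring
          _ ≤ |pe i * (w i - x' ω i)| := le_abs_self _
          _ = |pe i| * |w i - x' ω i| := abs_mul _ _
          _ ≤ |pe i| * dist w (x' ω) := by
              exact mul_le_mul_of_nonneg_left h2 (abs_nonneg _)
      have h3 : ∑ i, |pe i| * dist w (x' ω) = dist w (x' ω) := by
        rw [← Finset.sum_mul, hp1, one_mul]
      linarith
    rcases hnt ω w (x' ω) (xe ω) hwp with hcase | hcase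
    · exact hopt ω w hwX hcase hbound
    · have : Pref ω (xe ω) (E.emission xe ye) (x' ω) (E.emission xe ye) :=
        (hext ω xe ye pe (xe ω) (x' ω)).mp hcase
      rw [← hem] at this
      exact hweak ω (by rw [hem]; rw [hem] at this; exact this)
  -- Step 2: strict inequality for the strictly better-off agent
  have keys : W ω0 < dotp pe (x' ω0) := by
    rw [hem] at hstrict
    have hp : E.pref ω0 xe ye pe (x' ω0) (xe ω0) :=
      (hext ω0 xe ye pe (x' ω0) (xe ω0)).mpr hstrict
    have := hopt ω0 (x' ω0) (hc'.1 ω0) hp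
    push_neg at this
    exact this
  -- Step 3: summation and accounting
  set A : ℝ := ∑ ω, dotp pe (x' ω) with hA
  set B : ℝ := ∑ ω, dotp pe (xe ω) with hB
  have hBA : B < A := by
    have h1 : B ≤ ∑ ω, W ω := Finset.sum_le_sum fun ω _ => hbud ω
    have h2 : ∑ ω, W ω < A := by
      apply Finset.sum_lt_sum (fun ω _ => key ω) ⟨ω0, Finset.mem_univ _, keys⟩
    linarith
  -- coordinatewise totals
  have hi : ∀ i, ∑ ω, x' ω i - ∑ ω, xe ω i = ∑ j, y' j i - ∑ j, ye j i := by
    intro i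
    by_cases hiR : i ∈ E.R
    · have h1 := hc'.2.2.1 i hiR
      have h2 := hc.2.2.1 i hiR
      simp only [QuotaEconomy.excess] at h1 h2
      linarith
    · have h1 := (hc'.2.2.2 i hiR).2 (hfree i hiR)
      have h2 := (hc.2.2.2 i hiR).2 (hfree i hiR)
      simp only [QuotaEconomy.excess] at h1 h2
      linarith
  have e1 : A = ∑ i, pe i * ∑ ω, x' ω i := by
    simp only [hA, dotp]
    rw [Finset.sum_comm]
    simp [Finset.mul_sum]
  have e2 : B = ∑ i, pe i * ∑ ω, xe ω i := by
    simp only [hB, dotp]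
    rw [Finset.sum_comm]
    simp [Finset.mul_sum]
  have e3 : ∑ i, pe i * ∑ j, y' j i = ∑ j, dotp pe (y' j) := by
    simp only [dotp]
    rw [Finset.sum_comm]
    simp [Finset.mul_sum]
  have e4 : ∑ i, pe i * ∑ j, ye j i = ∑ j, dotp pe (ye j) := by
    simp only [dotp]
    rw [Finset.sum_comm]
    simp [Finset.mul_sum]
  have hacct : A - B = ∑ j, dotp pe (y' j) - ∑ j, dotp pe (ye j) := by
    rw [e1, e2, ← e3, ← e4, ← Finset.sum_sub_distrib, ← Finset.sum_sub_distrib]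
    apply Finset.sum_congr rfl
    intro i _
    rw [← mul_sub, ← mul_sub, hi i]
  have hle : ∑ j, dotp pe (y' j) ≤ ∑ j, dotp pe (ye j) :=
    Finset.sum_le_sum fun j _ => hprof j (y' j) (hc'.2.1 j)
  linarith
end
end

section
/- Let (x̄,ȳ,p̄) be a quota equilibrium and suppose some quota-compliant pair (f̂,ŷ) with the same total net emission Pareto dominates (x̄,ȳ). If agent ω's preference at (x̄,ȳ,p̄) is locally non-satiated and negatively transitive, then p̄·f̂(ω) ≥ p̄·e(ω)+Σ_j θ_{ωj}(p̄·ȳ(j)+π_k(p̄)·m^{(j)}); that is, no agent's dominating consumption costs strictly less than her equilibrium wealth. -/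
open Finset

noncomputable section

variable {Ω J C : Type*}

variable [Fintype Ω] [Fintype J] [Fintype C]

/-- key claim: if a quota-compliant pair with the same total net emission
Pareto dominates the equilibrium pair, and agent `ω`'s equilibrium preference is locally
non-satiated and negatively transitive, then her dominating consumption costs at least
her equilibrium wealth. -/
theorem stmt6 [DecidableEq C] (E : QuotaEconomy Ω J C)
    (Pref : Ω → (C → ℝ) → (C → ℝ) → (C → ℝ) → (C → ℝ) → Prop)
    (hext : ∀ ω x y p a b, E.pref ω x y p a b ↔ Pref ω a (E.emission x y) b (E.emission x y))
    (xe : Ω → C → ℝ) (ye : J → C → ℝ) (pe : C → ℝ)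
    (heq : E.Equilibrium xe ye pe)
    (fh : Ω → C → ℝ) (yh : J → C → ℝ)
    (hcomp : E.Compliant fh yh)
    (hsame : E.emission fh yh = E.emission xe ye)
    -- Pareto domination: no agent strictly prefers the old pair, some agent strictly
    -- prefers the new pair
    (hweak : ∀ ω, ¬ Pref ω (xe ω) (E.emission xe ye) (fh ω) (E.emission fh yh))
    (hstrict : ∃ ω, Pref ω (fh ω) (E.emission fh yh) (xe ω) (E.emission xe ye))
    (ω : Ω)
    (hnt : ∀ a b c, E.pref ω xe ye pe a b →
        (E.pref ω xe ye pe a c ∨ E.pref ω xe ye pe c b))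
    (hlns : ∀ z ∈ E.X ω, ∀ ε : ℝ, 0 < ε →
        ∃ w ∈ E.X ω, dist w z < ε ∧ E.pref ω xe ye pe w z) :
    E.wealth pe ye ω ≤ dotp pe (fh ω) := by
  by_contra hlt
  push_neg at hlt
  set ε := E.wealth pe ye ω - dotp pe (fh ω) with hε
  have hεpos : 0 < ε := by simp [hε]; linarith
  obtain ⟨w, hwX, hwdist, hwpref⟩ := hlns (fh ω) (hcomp.1 ω) ε hεpos
  -- cost estimate: dotp pe w ≤ dotp pe (fh ω) + dist w (fh ω)
  have hcost : dotp pe w ≤ dotp pe (fh ω) + dist w (fh ω) := by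
    have : dotp pe w - dotp pe (fh ω) ≤ dist w (fh ω) := by
      have h1 : dotp pe w - dotp pe (fh ω) = ∑ i, pe i * (w i - fh ω i) := by
        simp [dotp, ← Finset.sum_sub_distrib, mul_sub]
      rw [h1]
      calc ∑ i, pe i * (w i - fh ω i)
          ≤ ∑ i, |pe i| * dist w (fh ω) := by
            apply Finset.sum_le_sum
            intro i _
            calc pe i * (w i - fh ω i) ≤ |pe i * (w i - fh ω i)| := le_abs_self _
              _ = |pe i| * |w i - fh ω i| := abs_mul _ _
              _ ≤ |pe i| * dist w (fh ω) := by
                  apply mul_le_mul_of_nonneg_left _ (abs_nonneg _)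
                  have := dist_le_pi_dist w (fh ω) i
                  simpa [Real.dist_eq] using this
        _ = (∑ i, |pe i|) * dist w (fh ω) := by rw [Finset.sum_mul]
        _ = dist w (fh ω) := by rw [heq.1, one_mul]
    linarith
  have hwaff : dotp pe w ≤ E.wealth pe ye ω := by
    have : dotp pe w < dotp pe (fh ω) + ε := by linarith
    simpa [hε] using this.le
  -- negative transitivity: w ≻ fh ω gives w ≻ xe ω or xe ω ≻ fh ω
  rcases hnt w (fh ω) (xe ω) hwpref with hw | hx
  · exact heq.2.2.2.2 ω w hwX hw hwaff
  · exact hweak ω (by rw [hsame]; exact ((hext ω xe ye pe (xe ω) (fh ω)).mp hx))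
end
end

section
/- Let F be a finite production economy with emission tax and (x̄,ȳ,p̄) a V-compliant emission tax equilibrium with tax rate t and rebate shares λ. Define a global quota economy E with the same agents and private firms, a government firm with production set {0} and quota m=−C(x̄,ȳ) (the negative of the equilibrium total net emission), government firm shares equal to the rebate shares λ, and compliance region Z(m) matching V on the non-regulated coordinates. Then (x̄,ȳ,p̄) is a Z(m)-compliant global quota equilibrium of E. -/
open Finset

noncomputable section

variable {Ω J C : Type*}

variable [Fintype Ω] [Fintype J] [Fintype C]

/-- A finite production economy with emission tax: all firms are private; the
government levies a tax `t` on the regulated commodities `R` and rebates its revenue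
according to the rebate shares `lam`. -/
structure TaxEconomy (Ω J C : Type*) where
  X : Ω → Set (C → ℝ)
  pref : Ω → (Ω → C → ℝ) → (J → C → ℝ) → (C → ℝ) → (C → ℝ) → (C → ℝ) → Prop
  e : Ω → C → ℝ
  θ : Ω → J → ℝ
  Y : J → Set (C → ℝ)
  R : Finset C
  free : C → Prop
  t : C → ℝ
  lam : Ω → ℝ

variable [Fintype Ω] [Fintype J] [Fintype C]

/-- Total net emission of the regulated commodities. -/
def TaxEconomy.emission [DecidableEq C] (F : TaxEconomy Ω J C)
    (x : Ω → C → ℝ) (y : J → C → ℝ) : C → ℝ :=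
  fun i => if i ∈ F.R then (∑ ω, F.e ω i + ∑ j, y j i - ∑ ω, x ω i) else 0

/-- Aggregate excess demand. -/
def TaxEconomy.excess (F : TaxEconomy Ω J C) (x : Ω → C → ℝ) (y : J → C → ℝ) : C → ℝ :=
  fun i => ∑ ω, x ω i - ∑ ω, F.e ω i - ∑ j, y j i

/-- Agent `ω`'s wealth: endowment value, dividends, and her rebate share of the
government's tax revenue `t·C(x,y)`. -/
def TaxEconomy.wealth [DecidableEq C] (F : TaxEconomy Ω J C) (p : C → ℝ)
    (x : Ω → C → ℝ) (y : J → C → ℝ) (ω : Ω) : ℝ :=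
  dotp p (F.e ω) + ∑ j, F.θ ω j * dotp p (y j) +
    F.lam ω * ∑ i ∈ F.R, F.t i * F.emission x y i

/-- Emission tax equilibrium: `π_k(p) = −t`, price on the simplex, profit maximization,
demand optimality, and excess demand in the compliance region `V`. -/
def TaxEconomy.Equilibrium [DecidableEq C] (F : TaxEconomy Ω J C)
    (x : Ω → C → ℝ) (y : J → C → ℝ) (p : C → ℝ) : Prop :=
  (∑ i, |p i|) = 1 ∧
  (∀ i ∈ F.R, p i = - F.t i) ∧
  (∀ ω, x ω ∈ F.X ω) ∧ (∀ j, y j ∈ F.Y j) ∧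
  (∀ j, ∀ z ∈ F.Y j, dotp p z ≤ dotp p (y j)) ∧
  (∀ ω, dotp p (x ω) ≤ F.wealth p x y ω) ∧
  (∀ ω, ∀ z ∈ F.X ω, F.pref ω x y p z (x ω) → ¬ dotp p z ≤ F.wealth p x y ω) ∧
  (∀ i ∈ F.R, F.excess x y i ≤ 0) ∧
  (∀ i ∉ F.R, F.excess x y i ≤ 0 ∧ (¬ F.free i → F.excess x y i = 0))

/-- Firm `none` is the government firm, with production set `{0}` and quota `-C(x, y)`;
firm `some j` is the private firm `j`. -/
def TaxEconomy.toQuotaEconomy [DecidableEq C] (F : TaxEconomy Ω J C)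
    (x : Ω → C → ℝ) (y : J → C → ℝ) : QuotaEconomy Ω (Option J) C where
  X := F.X
  pref := fun ω x y' p a b => F.pref ω x (fun j => y' (some j)) p a b
  e := F.e
  θ := fun ω o => o.elim (F.lam ω) (F.θ ω)
  Y := fun o => o.elim ({0} : Set (C → ℝ)) F.Y
  R := F.R
  m := fun o => o.elim (fun i => - F.emission x y i) (fun _ => (0 : C → ℝ))
  free := F.free

def withGovFirm (y : J → C → ℝ) : Option J → C → ℝ :=
  fun o => o.elim (0 : C → ℝ) y

@[simp]
lemma withGovFirm_none (y : J → C → ℝ) : withGovFirm y none = 0 := rfl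

@[simp]
lemma withGovFirm_some (y : J → C → ℝ) (j : J) : withGovFirm y (some j) = y j := rfl

@[simp]
lemma dotp_zero_right (p : C → ℝ) : dotp p 0 = 0 := by
  simp [dotp]

namespace TaxEconomy

variable [DecidableEq C] (F : TaxEconomy Ω J C)

lemma emission_of_mem_R (x : Ω → C → ℝ) (y : J → C → ℝ) {i : C} (hi : i ∈ F.R) :
    F.emission x y i = - F.excess x y i := by
  simp only [emission, excess, if_pos hi]
  ring

lemma toQuotaEconomy_excess (x x' : Ω → C → ℝ) (y y' : J → C → ℝ) :
    (F.toQuotaEconomy x y).excess x' (withGovFirm y') = F.excess x' y' := by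
  ext i
  simp [QuotaEconomy.excess, TaxEconomy.excess, toQuotaEconomy, Fintype.sum_option]

lemma sum_quota_toQuotaEconomy (x : Ω → C → ℝ) (y : J → C → ℝ) (i : C) :
    ∑ o, (F.toQuotaEconomy x y).m o i = - F.emission x y i := by
  simp [toQuotaEconomy, Fintype.sum_option]

/-- When regulated prices are the negative tax rates, the government firm's quota revenue
`p · (-C(x, y))` is exactly the tax revenue `t · C(x, y)` that the tax economy rebates. -/
lemma toQuotaEconomy_wealth {p : C → ℝ} (hpt : ∀ i ∈ F.R, p i = - F.t i)
    (x : Ω → C → ℝ) (y : J → C → ℝ) (ω : Ω) :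
    (F.toQuotaEconomy x y).wealth p (withGovFirm y) ω = F.wealth p x y ω := by
  have hrevenue : ∑ i ∈ F.R, p i * - F.emission x y i = ∑ i ∈ F.R, F.t i * F.emission x y i :=
    Finset.sum_congr rfl fun i hi => by rw [hpt i hi]; ring
  simp only [QuotaEconomy.wealth, TaxEconomy.wealth, toQuotaEconomy, Fintype.sum_option,
    withGovFirm_none, withGovFirm_some, Option.elim, dotp_zero_right, Pi.zero_apply, mul_zero,
    Finset.sum_const_zero, add_zero, zero_add, hrevenue]
  ring

end TaxEconomy

/-- every emission tax equilibrium is a global quota equilibrium of the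
economy obtained by adding a government firm (index `none`) with production set {0},
quota equal to the negative of the equilibrium total net emission, and government-firm
shares equal to the rebate shares. -/
theorem stmt7 [DecidableEq C] (F : TaxEconomy Ω J C)
    (xe : Ω → C → ℝ) (ye : J → C → ℝ) (pe : C → ℝ)
    (heq : F.Equilibrium xe ye pe) :
    QuotaEconomy.Equilibrium
      (Ω := Ω) (J := Option J) (C := C)
      { X := F.X
        pref := fun ω x y' p a b => F.pref ω x (fun j => y' (some j)) p a b
        e := F.e
        θ := fun ω o => o.elim (F.lam ω) (F.θ ω)
        Y := fun o => o.elim ({0} : Set (C → ℝ)) F.Y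
        R := F.R
        m := fun o => o.elim (fun i => - F.emission xe ye i) (fun _ => (0 : C → ℝ))
        free := F.free }
      xe (fun o => o.elim (0 : C → ℝ) ye) pe := by
  obtain ⟨hsimplex, hpt, hX, hY, hprofit, hbudget, hoptimal, -, hfree⟩ := heq
  change (F.toQuotaEconomy xe ye).Equilibrium xe (withGovFirm ye) pe
  have hwealth := F.toQuotaEconomy_wealth hpt xe ye
  refine ⟨hsimplex, ⟨hX, ?_, fun i hi => ?_, fun i hi => ?_⟩, ?_, fun ω => ?_, fun ω => ?_⟩
  · rintro (_ | j)
    · rfl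
    · exact hY j
  · rw [F.toQuotaEconomy_excess, F.sum_quota_toQuotaEconomy, F.emission_of_mem_R xe ye hi,
      neg_neg]
  · rw [F.toQuotaEconomy_excess]
    exact hfree i hi
  · rintro (_ | j) z hz
    · rw [Set.mem_singleton_iff.mp hz]
      rfl
    · exact hprofit j z hz
  · rw [hwealth]
    exact hbudget ω
  · rw [hwealth]
    exact hoptimal ω
end
end

section
/- In the same one-agent linear-sequestration emission tax economy, for every emission tax rate t < 1/4, the total net emission of CO2 at any V-compliant emission tax equilibrium equals 1 (the sequestration firm is inactive and the coal-burning firm operates at full capacity). -/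
noncomputable section

/-- First firm: burn r units of coal to get r units of electricity and r units of CO2. -/
def Y1 : Set (ℝ × ℝ × ℝ) := {y | ∃ r : ℝ, 0 ≤ r ∧ y = (r, -r, r)}

/-- Second firm: use r units of electricity to sequester 2r units of CO2. -/
def Y2 : Set (ℝ × ℝ × ℝ) := {y | ∃ r : ℝ, 0 ≤ r ∧ y = (-(2*r), 0, -r)}

/-- Total net CO2 emission. -/
def emiss (x y1 y2 : ℝ × ℝ × ℝ) : ℝ := e0.1 + y1.1 + y2.1 - x.1

/-- `V`-compliant emission tax equilibrium (V = ℝ≤0³) of the one-agent economy with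
firms `Y1`, `Y2`, tax rate `t` on CO2 emissions and full rebate to the agent.  The agent
maximizes `c₃ − v²/2`; since the externality `v` is fixed at equilibrium, demand
optimality means maximizing electricity consumption over the budget set. -/
def TaxEq (t : ℝ) (x y1 y2 p : ℝ × ℝ × ℝ) : Prop :=
  p.1 = -t ∧ |p.1| + |p.2.1| + |p.2.2| = 1 ∧
  y1 ∈ Y1 ∧ (∀ z ∈ Y1, dot3 p z ≤ dot3 p y1) ∧
  y2 ∈ Y2 ∧ (∀ z ∈ Y2, dot3 p z ≤ dot3 p y2) ∧
  x ∈ X0 ∧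
  dot3 p x ≤ dot3 p e0 + dot3 p y1 + dot3 p y2 + t * emiss x y1 y2 ∧
  (∀ z ∈ X0, dot3 p z ≤ dot3 p e0 + dot3 p y1 + dot3 p y2 + t * emiss x y1 y2 →
    z.2.2 ≤ x.2.2) ∧
  x.1 - e0.1 - y1.1 - y2.1 ≤ 0 ∧
  x.2.1 - e0.2.1 - y1.2.1 - y2.2.1 ≤ 0 ∧
  x.2.2 - e0.2.2 - y1.2.2 - y2.2.2 ≤ 0

set_option maxHeartbeats 1000000 in
/-- for every tax rate t < 1/4 the total net CO2 emission at any emission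
tax equilibrium equals 1. -/
theorem stmt10 (t : ℝ) (ht0 : 0 ≤ t) (ht : t < 1/4) :
    ∀ x y1 y2 p, TaxEq t x y1 y2 p → emiss x y1 y2 = 1 := by
  rintro x y1 y2 p ⟨hp1, hnorm, ⟨r1, hr1, rfl⟩, hopt1, ⟨r2, hr2, rfl⟩, hopt2,
    ⟨hx1, hx21, hx22⟩, hbud, hdem, hm1, hm2, hm3⟩
  -- market clearing in usable form
  have hm1' : 2*r2 ≤ r1 := by simp [e0, hx1] at hm1; linarith
  have hm2' : x.2.1 + r1 ≤ 1 := by simp [e0] at hm2; linarith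
  have hm3' : x.2.2 + r2 ≤ r1 := by simp [e0] at hm3; linarith
  -- firm 1 optimality : p₂ ≥ p₃ - t, and profit nonneg
  have ha : p.2.2 - t ≤ p.2.1 := by
    have h := hopt1 (r1+1, -(r1+1), r1+1) ⟨r1+1, by linarith, rfl⟩
    simp only [dot3, hp1] at h
    linarith
  have ha0 : 0 ≤ -t*r1 - p.2.1*r1 + p.2.2*r1 := by
    have h := hopt1 (0,0,0) ⟨0, le_rfl, by norm_num⟩
    simp only [dot3, hp1] at h
    linarith
  -- firm 2 optimality : p₃ ≥ 2t, and profit nonneg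
  have hb : 2*t ≤ p.2.2 := by
    have h := hopt2 (-(2*(r2+1)), 0, -(r2+1)) ⟨r2+1, by linarith, rfl⟩
    simp only [dot3, hp1] at h
    linarith
  have hb0 : 0 ≤ 2*t*r2 - p.2.2*r2 := by
    have h := hopt2 (0,0,0) ⟨0, le_rfl, by norm_num⟩
    simp only [dot3, hp1] at h
    linarith
  -- p₃ > 0
  have hp3 : 0 < p.2.2 := by
    by_contra hcon
    push_neg at hcon
    have hz : ((0 : ℝ), x.2.1, x.2.2 + 1) ∈ X0 :=
      ⟨rfl, hx21, by show (0:ℝ) ≤ x.2.2 + 1; linarith⟩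
    have hd : dot3 p (0, x.2.1, x.2.2+1) ≤ dot3 p x := by
      simp only [dot3, hx1]
      nlinarith
    have h2 : x.2.2 + 1 ≤ x.2.2 := hdem _ hz (hd.trans hbud)
    linarith
  -- the agent's wealth lower bound, via the demand condition
  have hnum : 0 ≤ p.2.1 + t*(r1 - 2*r2) := by
    have h1 : 0 ≤ t*(r1 - 2*r2) := mul_nonneg ht0 (by linarith)
    linarith
  set c : ℝ := (p.2.1 + t*(r1 - 2*r2))/p.2.2 with hcdef
  have hc0 : 0 ≤ c := div_nonneg hnum hp3.le
  have hcc : p.2.2 * c = p.2.1 + t*(r1 - 2*r2) := by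
    rw [hcdef]; exact mul_div_cancel₀ _ (ne_of_gt hp3)
  have hdc : dot3 p ((0:ℝ),(0:ℝ),c) ≤
      dot3 p e0 + dot3 p (r1,-r1,r1) + dot3 p (-(2*r2),0,-r2) + t * emiss x (r1,-r1,r1) (-(2*r2),0,-r2) := by
    simp only [dot3, e0, emiss, hx1, hp1]
    linarith [ha0, hb0, hcc]
  have hcle : c ≤ x.2.2 := hdem _ ⟨rfl, le_rfl, hc0⟩ hdc
  have hkey : p.2.1 + t*(r1 - 2*r2) ≤ p.2.2 * x.2.2 := by
    rw [← hcc]; exact mul_le_mul_of_nonneg_left hcle hp3.le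
  have hxr : p.2.2 * x.2.2 ≤ p.2.2 * (r1 - r2) :=
    mul_le_mul_of_nonneg_left (by linarith) hp3.le
  by_cases h2t : p.2.2 = 2*t
  · -- ruled out by the price normalization
    exfalso
    have ht' : 0 < t := by linarith
    have hq1 : t ≤ p.2.1 := by linarith [ha, h2t]
    have hq2 : p.2.1 ≤ t := by
      have h1 : t * r1 ≤ t * 1 :=
        mul_le_mul_of_nonneg_left (by linarith) ht0
      rw [h2t] at hkey hxr
      nlinarith [hkey, hxr, h1]
    have hq : p.2.1 = t := le_antisymm hq2 hq1
    rw [hp1, hq, h2t, abs_of_nonpos (by linarith), abs_of_nonneg ht'.le,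
      abs_of_nonneg (by linarith)] at hnorm
    linarith
  · have hbs : 2*t < p.2.2 := lt_of_le_of_ne hb (Ne.symm h2t)
    have hr20 : r2 = 0 := by
      by_contra h
      have h' : 0 < r2 := lt_of_le_of_ne hr2 (Ne.symm h)
      have := mul_pos h' (show (0:ℝ) < p.2.2 - 2*t by linarith)
      nlinarith [hb0]
    subst hr20
    have hpt : 0 < p.2.2 - t := by linarith
    have hr11 : 1 ≤ r1 := by
      by_contra h
      push_neg at h
      have := mul_pos hpt (show (0:ℝ) < 1 - r1 by linarith)
      nlinarith [ha, hkey, hxr]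
    have hr1e : r1 = 1 := le_antisymm (by linarith) hr11
    simp only [emiss, e0, hx1, hr1e]
    norm_num
end
end

section
/- In the same one-agent linear-sequestration emission tax economy with tax rate t = 1/4, for every v∈[0,1] there exists a V-compliant emission tax equilibrium whose total net CO2 emission equals v; namely x̂=(0,0,(1+v)/2), ŷ=((1,−1,1),(v−1,0,(v−1)/2)), p̂=(−1/4,1/4,1/2). Consequently the emission tax rate does not determine the equilibrium emission level. -/
noncomputable section

/-- at tax rate 1/4, for every v ∈ [0,1] there is an emission tax
equilibrium with total net CO2 emission v; so the tax rate does not determine the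
equilibrium emission level. -/
theorem stmt11 (v : ℝ) (hv : v ∈ Set.Icc (0:ℝ) 1) :
    TaxEq (1/4) (0, 0, (1+v)/2) (1, -1, 1) (v-1, 0, (v-1)/2) (-(1/4), 1/4, 1/2) ∧
    emiss (0, 0, (1+v)/2) (1, -1, 1) (v-1, 0, (v-1)/2) = v := by
  obtain ⟨hv0, hv1⟩ := hv
  constructor
  · refine ⟨by norm_num, by rw [abs_of_nonpos, abs_of_nonneg, abs_of_nonneg] <;> norm_num,
      ⟨1, by norm_num⟩, ?_, ⟨(1-v)/2, by linarith, by simp [Prod.ext_iff]; ring_nf; exact ⟨trivial, trivial⟩⟩, ?_,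
      ⟨rfl, le_refl 0, by linarith⟩, ?_, ?_, ?_, ?_, ?_⟩
    · rintro z ⟨r, hr, rfl⟩; simp [dot3]; nlinarith
    · rintro z ⟨r, hr, rfl⟩; simp [dot3]; nlinarith
    · simp [dot3, e0, emiss]; nlinarith
    · rintro z ⟨h1, h2, h3⟩ hb
      simp [dot3, e0, emiss, h1] at hb ⊢
      linarith
    · simp [e0]; linarith
    · simp [e0]
    · simp [e0]; linarith
  · simp [emiss, e0]
end
end

section
/- In the one-agent emission tax economy with nonlinear sequestration technology Y2={(−a,0,−r²): r≥0, 0≤a≤2r} (and Y1={(r,−r,r): r≥0} as before), for every tax rate t ≤ 1/4 there exists a unique V-compliant emission tax equilibrium, given by x̄=(0,0,1−4t²), ȳ=((1,−1,1),(−4t,0,−4t²)), p̄=(−t,1/2−t,1/2); and for t > 1/4 no emission tax equilibrium exists. In particular the equilibrium total net CO2 emission equals 1−4t, a strictly decreasing bijection from [0,1/4] onto [0,1]. -/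
noncomputable section

/-- Nonlinear sequestration technology: using r units of electricity one can sequester
up to 2r units of CO2, at electricity cost r². -/
def Y2N : Set (ℝ × ℝ × ℝ) :=
  {y | ∃ r a : ℝ, 0 ≤ r ∧ 0 ≤ a ∧ a ≤ 2*r ∧ y = (-a, 0, -(r^2))}

/-- Emission tax equilibrium of the one-agent economy with the nonlinear sequestration
firm `Y2N` (compliance region V = ℝ≤0³, full rebate to the agent). -/
def TaxEqN (t : ℝ) (x y1 y2 p : ℝ × ℝ × ℝ) : Prop :=
  p.1 = -t ∧ |p.1| + |p.2.1| + |p.2.2| = 1 ∧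
  y1 ∈ Y1 ∧ (∀ z ∈ Y1, dot3 p z ≤ dot3 p y1) ∧
  y2 ∈ Y2N ∧ (∀ z ∈ Y2N, dot3 p z ≤ dot3 p y2) ∧
  x ∈ X0 ∧
  dot3 p x ≤ dot3 p e0 + dot3 p y1 + dot3 p y2 + t * emiss x y1 y2 ∧
  (∀ z ∈ X0, dot3 p z ≤ dot3 p e0 + dot3 p y1 + dot3 p y2 + t * emiss x y1 y2 →
    z.2.2 ≤ x.2.2) ∧
  x.1 - e0.1 - y1.1 - y2.1 ≤ 0 ∧
  x.2.1 - e0.2.1 - y1.2.1 - y2.2.1 ≤ 0 ∧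
  x.2.2 - e0.2.2 - y1.2.2 - y2.2.2 ≤ 0

set_option maxHeartbeats 1000000 in
lemma taxEqN_forward {t : ℝ} (ht : 0 ≤ t) {x y1 y2 p : ℝ × ℝ × ℝ}
    (h : TaxEqN t x y1 y2 p) :
    t ≤ 1/4 ∧ x = (0, 0, 1 - 4*t^2) ∧ y1 = (1, -1, 1) ∧
      y2 = (-(4*t), 0, -(4*t^2)) ∧ p = (-t, 1/2 - t, 1/2) := by
  obtain ⟨x1, x2, x3⟩ := x
  obtain ⟨p1, p2, p3⟩ := p
  obtain ⟨hp1, hnorm, hy1Y, hy1max, hy2Y, hy2max, hxX, hbud, hopt, hf1, hf2, hf3⟩ := h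
  have hp1' : p1 = -t := hp1
  subst hp1'
  obtain ⟨r1, hr1, hy1⟩ := hy1Y
  subst hy1
  obtain ⟨r2, a2, hr2, ha2, ha2le, hy2⟩ := hy2Y
  subst hy2
  obtain ⟨hx1, hx2, hx3⟩ := hxX
  have hx1' : x1 = 0 := hx1
  have hx2' : (0:ℝ) ≤ x2 := hx2
  have hx3' : (0:ℝ) ≤ x3 := hx3
  subst hx1'
  -- scalar restatements (by definitional unfolding)
  have Hnorm : |-t| + |p2| + |p3| = 1 := hnorm
  have Hf1 : (0:ℝ) - 0 - r1 - (-a2) ≤ 0 := hf1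
  have Hf2 : x2 - 1 - (-r1) - 0 ≤ 0 := hf2
  have Hf3 : x3 - 0 - r1 - (-(r2^2)) ≤ 0 := hf3
  have Hbud : -t*0 + p2*x2 + p3*x3 ≤
      (-t*0 + p2*1 + p3*0) + (-t*r1 + p2*(-r1) + p3*r1)
        + (-t*(-a2) + p2*0 + p3*(-(r2^2))) + t*(0 + r1 + (-a2) - 0) := hbud
  -- Step A : p3 > 0
  have hp3 : 0 < p3 := by
    by_contra hc
    push_neg at hc
    have hmem : ((0:ℝ), x2, x3 + 1) ∈ X0 :=
      ⟨rfl, hx2', (show (0:ℝ) ≤ x3 + 1 by linarith only [hx3'])⟩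
    have hbz : -t*0 + p2*x2 + p3*(x3+1) ≤
        (-t*0 + p2*1 + p3*0) + (-t*r1 + p2*(-r1) + p3*r1)
          + (-t*(-a2) + p2*0 + p3*(-(r2^2))) + t*(0 + r1 + (-a2) - 0) := by
      linarith only [Hbud, hc]
    have HA : x3 + 1 ≤ x3 := hopt ((0:ℝ), x2, x3 + 1) hmem hbz
    linarith only [HA]
  -- Step B : p2 ≥ 0
  have hp2 : 0 ≤ p2 := by
    by_contra hc
    push_neg at hc
    have hpne : p2 ≠ 0 := ne_of_lt hc
    have hMpos : 0 < -p3 / p2 := div_pos_of_neg_of_neg (by linarith only [hp3]) hc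
    have hMval : p2 * (-p3 / p2) = -p3 := by
      field_simp
    have hmem : ((0:ℝ), x2 + (-p3 / p2), x3 + 1) ∈ X0 :=
      ⟨rfl, (show (0:ℝ) ≤ x2 + (-p3 / p2) by linarith only [hx2', hMpos]),
        (show (0:ℝ) ≤ x3 + 1 by linarith only [hx3'])⟩
    have hbz : -t*0 + p2*(x2 + (-p3 / p2)) + p3*(x3+1) ≤
        (-t*0 + p2*1 + p3*0) + (-t*r1 + p2*(-r1) + p3*r1)
          + (-t*(-a2) + p2*0 + p3*(-(r2^2))) + t*(0 + r1 + (-a2) - 0) := by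
      linarith only [Hbud, hMval]
    have HB : x3 + 1 ≤ x3 := hopt ((0:ℝ), x2 + (-p3 / p2), x3 + 1) hmem hbz
    linarith only [HB]
  -- normalization
  have hsum : t + p2 + p3 = 1 := by
    rw [abs_of_nonpos (by linarith only [ht] : -t ≤ 0), abs_of_nonneg hp2,
      abs_of_nonneg hp3.le] at Hnorm
    linarith only [Hnorm]
  -- Step C : firm 1
  have Hc1 : -t*(r1+1) + p2*(-(r1+1)) + p3*(r1+1) ≤ -t*r1 + p2*(-r1) + p3*r1 :=
    hy1max (r1 + 1, -(r1+1), r1+1) ⟨r1 + 1, by linarith only [hr1], rfl⟩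
  have Hc0 : -t*0 + p2*(-0) + p3*0 ≤ -t*r1 + p2*(-r1) + p3*r1 :=
    hy1max ((0:ℝ), -0, 0) ⟨0, le_refl 0, rfl⟩
  have hcle : -t - p2 + p3 ≤ 0 := by linarith only [Hc1]
  have hpi1 : 0 ≤ r1 * (-t - p2 + p3) := by linarith only [Hc0]
  -- Step D : firm 2
  have hunn : 0 ≤ t / p3 := div_nonneg ht hp3.le
  have hps : p3 * (t / p3) = t := by field_simp
  have Hz0 : -t*(-(2*(t/p3))) + p2*0 + p3*(-((t/p3)^2))
      ≤ -t*(-a2) + p2*0 + p3*(-(r2^2)) :=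
    hy2max (-(2*(t/p3)), 0, -((t/p3)^2))
      ⟨t/p3, 2*(t/p3), hunn, by linarith only [hunn], le_refl _, rfl⟩
  have hta : t * a2 ≤ 2 * t * r2 := by
    have := mul_le_mul_of_nonneg_left ha2le ht
    linarith only [this]
  have h4 : p3 * ((t/p3)^2) = t * (t/p3) := by
    calc p3 * ((t/p3)^2) = (p3*(t/p3))*(t/p3) := by ring
      _ = t * (t/p3) := by rw [hps]
  have h5 : p3 * (t/p3) * r2 = t * r2 := by rw [hps]
  have h1 : p3 * ((t/p3) - r2)^2 ≤ 0 := by nlinarith only [Hz0, hta, h4, h5]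
  have h2 : ((t/p3) - r2)^2 ≤ 0 := by
    have h2' : p3 * ((t/p3) - r2)^2 ≤ p3 * 0 := by rw [mul_zero]; exact h1
    exact (mul_le_mul_iff_right₀ hp3).mp h2'
  have hr2u : r2 = t/p3 := by
    have h3 := sq_eq_zero_iff.mp (le_antisymm h2 (sq_nonneg _))
    linarith only [h3]
  have hkey : p3 * r2 = t := by rw [hr2u]; exact hps
  rw [← hr2u] at Hz0
  have hta2 : t * a2 = 2 * t * r2 := le_antisymm hta (by linarith only [Hz0])
  have ha2eq : a2 = 2 * r2 := by
    rcases ht.eq_or_lt with h0 | h0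
    · have hr0 : r2 = 0 := by rw [hr2u, ← h0]; simp
      rw [hr0] at ha2le ⊢
      simp only [mul_zero] at ha2le ⊢
      linarith only [ha2le, ha2]
    · exact mul_left_cancel₀ (ne_of_gt h0) (by linarith only [hta2])
  -- Step E : p3 = 1/2
  have hceq : -t - p2 + p3 = 0 := by
    rcases hcle.lt_or_eq with hlt | heq
    · exfalso
      have hr10 : r1 = 0 := by
        by_contra hne
        have hpos : 0 < r1 := lt_of_le_of_ne hr1 (Ne.symm hne)
        have := mul_neg_of_pos_of_neg hpos hlt
        linarith only [hpi1, this]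
      have ha20 : a2 = 0 := by linarith only [Hf1, hr10, ha2]
      have hr20 : r2 = 0 := by linarith only [ha2eq, ha20, hr2]
      have ht0 : t = 0 := by rw [← hkey, hr20, mul_zero]
      have hr2sq : r2^2 = 0 := by rw [hr20]; norm_num
      have hx30 : x3 = 0 :=
        le_antisymm (by linarith only [Hf3, hr10, hr2sq]) hx3'
      have hmem : ((0:ℝ), 0, p2 / p3) ∈ X0 :=
        ⟨rfl, le_refl 0, div_nonneg hp2 hp3.le⟩
      have hpp : p3 * (p2 / p3) = p2 := by field_simp
      have hbz : -t*0 + p2*0 + p3*(p2/p3) ≤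
          (-t*0 + p2*1 + p3*0) + (-t*r1 + p2*(-r1) + p3*r1)
            + (-t*(-a2) + p2*0 + p3*(-(r2^2))) + t*(0 + r1 + (-a2) - 0) := by
        rw [hr10, ha20, hr20, ht0]
        linarith only [hpp]
      have HE : p2 / p3 ≤ x3 := hopt ((0:ℝ), 0, p2 / p3) hmem hbz
      have h1 : p2 / p3 ≤ 0 := by rw [← hx30]; exact HE
      have hdiv0 : p2 / p3 = 0 := le_antisymm h1 (div_nonneg hp2 hp3.le)
      rw [hdiv0, mul_zero] at hpp
      rw [ht0] at hlt
      linarith only [hlt, hpp, hp3]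
    · linarith only [heq]
  have hp3eq : p3 = 1/2 := by linarith only [hceq, hsum]
  have hp2eq : p2 = 1/2 - t := by linarith only [hceq, hsum]
  have hr2t : r2 = 2*t := by rw [hp3eq] at hkey; linarith only [hkey]
  have ha2t : a2 = 4*t := by rw [ha2eq, hr2t]; ring
  -- Step F : feasibility
  have hfr1 : 4*t ≤ r1 := by linarith only [Hf1, ha2t]
  have hr1le : r1 ≤ 1 := by linarith only [Hf2, hx2']
  have ht4 : t ≤ 1/4 := by linarith only [hfr1, hr1le]
  obtain ⟨w, hw_def⟩ : ∃ w : ℝ, w = 1/2 - t - 2*t^2 + t * r1 := ⟨_, rfl⟩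
  have hwnn : 0 ≤ w := by
    rw [hw_def]
    linarith only [mul_le_mul_of_nonneg_left hfr1 ht, sq_nonneg (t - 1/4)]
  have hmem2 : ((0:ℝ), 0, 2*w) ∈ X0 :=
    ⟨rfl, le_refl 0, (show (0:ℝ) ≤ 2*w by linarith only [hwnn])⟩
  have hbz2 : -t*0 + p2*0 + p3*(2*w) ≤
      (-t*0 + p2*1 + p3*0) + (-t*r1 + p2*(-r1) + p3*r1)
        + (-t*(-a2) + p2*0 + p3*(-(r2^2))) + t*(0 + r1 + (-a2) - 0) := by
    rw [hp2eq, hp3eq, hr2t, ha2t, hw_def]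
    ring_nf
    linarith only []
  have hx3ge : 2*w ≤ x3 := hopt ((0:ℝ), 0, 2*w) hmem2 hbz2
  have HbudW : p2*x2 + p3*x3 ≤ w := by
    have heqw : (-t*0 + p2*1 + p3*0) + (-t*r1 + p2*(-r1) + p3*r1)
        + (-t*(-a2) + p2*0 + p3*(-(r2^2))) + t*(0 + r1 + (-a2) - 0) = w := by
      rw [hp2eq, hp3eq, hr2t, ha2t, hw_def]; ring
    linarith only [Hbud, heqw]
  rw [hp3eq] at HbudW
  have hnn2 : 0 ≤ p2 * x2 := mul_nonneg hp2 hx2'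
  have hp2x2 : p2 * x2 ≤ 0 := by linarith only [HbudW, hx3ge]
  have hx3eq : x3 = 2*w := by linarith only [HbudW, hx3ge, hnn2]
  have hr1ge : 1 ≤ r1 := by
    have h3 : x3 ≤ r1 - r2^2 := by linarith only [Hf3]
    rw [hx3eq, hw_def, hr2t] at h3
    by_contra hcon
    push_neg at hcon
    have := mul_pos (by linarith only [hcon] : (0:ℝ) < 1 - r1)
      (by linarith only [ht4] : (0:ℝ) < 1 - 2*t)
    linarith only [h3, this]
  have hr1eq : r1 = 1 := le_antisymm hr1le hr1ge
  have hx2eq : x2 = 0 := by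
    rw [hp2eq] at hp2x2
    rcases hx2'.eq_or_lt with h | h
    · exact h.symm
    · exfalso
      have := mul_pos (by linarith only [ht4] : (0:ℝ) < 1/2 - t) h
      linarith only [this, hp2x2]
  refine ⟨ht4, ?_, ?_, ?_, ?_⟩
  · rw [hx2eq, hx3eq, hw_def, hr1eq,
      show (2:ℝ)*(1/2 - t - 2*t^2 + t*1) = 1 - 4*t^2 from by ring]
  · rw [hr1eq]
  · rw [ha2t, hr2t, show ((2*t:ℝ))^2 = 4*t^2 from by ring]
  · rw [hp2eq, hp3eq]

lemma taxEqN_backward {t : ℝ} (ht : 0 ≤ t) (ht4 : t ≤ 1/4) :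
    TaxEqN t (0, 0, 1 - 4*t^2) (1, -1, 1) (-(4*t), 0, -(4*t^2)) (-t, 1/2 - t, 1/2) := by
  refine ⟨rfl, ?_, ⟨1, by norm_num, by norm_num⟩, ?_, ?_, ?_, ?_, ?_, ?_, ?_, ?_, ?_⟩
  · show |-t| + |1/2 - t| + |1/2| = (1:ℝ)
    rw [abs_of_nonpos (by linarith : -t ≤ 0),
      abs_of_nonneg (by linarith : (0:ℝ) ≤ 1/2 - t),
      abs_of_nonneg (by norm_num : (0:ℝ) ≤ (1:ℝ)/2)]
    ring
  · rintro z ⟨r, hr, rfl⟩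
    show -t*r + (1/2 - t)*(-r) + (1/2)*r ≤ -t*1 + (1/2 - t)*(-1) + (1/2)*1
    nlinarith
  · exact ⟨2*t, 4*t, by linarith, by linarith, by linarith,
      by rw [show ((2*t:ℝ))^2 = 4*t^2 from by ring]⟩
  · rintro z ⟨r, a, hr, ha, hale, rfl⟩
    show -t*(-a) + (1/2 - t)*0 + (1/2)*(-(r^2))
        ≤ -t*(-(4*t)) + (1/2 - t)*0 + (1/2)*(-(4*t^2))
    nlinarith [sq_nonneg (r - 2*t), mul_le_mul_of_nonneg_left hale ht]
  · exact ⟨rfl, le_refl 0, (show (0:ℝ) ≤ 1 - 4*t^2 by nlinarith)⟩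
  · show -t*0 + (1/2 - t)*0 + (1/2)*(1 - 4*t^2) ≤
      (-t*0 + (1/2 - t)*1 + (1/2)*0) + (-t*1 + (1/2 - t)*(-1) + (1/2)*1)
        + (-t*(-(4*t)) + (1/2 - t)*0 + (1/2)*(-(4*t^2))) + t*(0 + 1 + -(4*t) - 0)
    nlinarith
  · rintro z ⟨hz1, hz2, hz3⟩ hb
    have hb' : -t*z.1 + (1/2 - t)*z.2.1 + (1/2)*z.2.2 ≤
        (-t*0 + (1/2 - t)*1 + (1/2)*0) + (-t*1 + (1/2 - t)*(-1) + (1/2)*1)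
          + (-t*(-(4*t)) + (1/2 - t)*0 + (1/2)*(-(4*t^2))) + t*(0 + 1 + -(4*t) - 0) := hb
    show z.2.2 ≤ 1 - 4*t^2
    rw [hz1] at hb'
    nlinarith [mul_nonneg (by linarith : (0:ℝ) ≤ 1/2 - t) hz2]
  · show (0:ℝ) - 0 - 1 - (-(4*t)) ≤ 0
    linarith
  · show (0:ℝ) - 1 - (-1) - 0 ≤ 0
    norm_num
  · show (1 - 4*t^2) - 0 - 1 - (-(4*t^2)) ≤ 0
    ring_nf
    norm_num

/-- with the nonlinear sequestration technology there is a unique emission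
tax equilibrium for each tax rate t ∈ [0,1/4] (given explicitly) and none for t > 1/4;
the equilibrium emission 1 − 4t is a strictly decreasing bijection from [0,1/4] onto [0,1]. -/
theorem stmt12 :
    (∀ t : ℝ, 0 ≤ t → t ≤ 1/4 → ∀ x y1 y2 p,
      (TaxEqN t x y1 y2 p ↔
        (x = (0, 0, 1 - 4*t^2) ∧ y1 = (1, -1, 1) ∧ y2 = (-(4*t), 0, -(4*t^2)) ∧
          p = (-t, 1/2 - t, 1/2)))) ∧
    (∀ t : ℝ, 1/4 < t → ¬ ∃ x y1 y2 p, TaxEqN t x y1 y2 p) ∧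
    (∀ t : ℝ, 0 ≤ t → t ≤ 1/4 → ∀ x y1 y2 p, TaxEqN t x y1 y2 p →
      emiss x y1 y2 = 1 - 4*t) ∧
    StrictAntiOn (fun t : ℝ => 1 - 4*t) (Set.Icc 0 (1/4)) ∧
    (fun t : ℝ => 1 - 4*t) '' Set.Icc 0 (1/4) = Set.Icc 0 1 := by
  refine ⟨?_, ?_, ?_, ?_, ?_⟩
  · intro t ht ht4 x y1 y2 p
    constructor
    · intro h
      obtain ⟨_, hx, hy1, hy2, hp⟩ := taxEqN_forward ht h
      exact ⟨hx, hy1, hy2, hp⟩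
    · rintro ⟨rfl, rfl, rfl, rfl⟩
      exact taxEqN_backward ht ht4
  · rintro t ht ⟨x, y1, y2, p, h⟩
    have := (taxEqN_forward (by linarith) h).1
    linarith
  · intro t ht ht4 x y1 y2 p h
    obtain ⟨_, rfl, rfl, rfl, _⟩ := taxEqN_forward ht h
    simp only [emiss, e0]
    ring
  · intro a _ b _ hab
    simp only
    linarith
  · ext y
    simp only [Set.mem_image, Set.mem_Icc]
    constructor
    · rintro ⟨t, ⟨h1, h2⟩, rfl⟩
      constructor <;> linarith
    · rintro ⟨h1, h2⟩
      exact ⟨(1 - y)/4, ⟨by linarith, by linarith⟩, by ring⟩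
end
end

section
/- In the one-agent linear-sequestration economy with a fuel tax on coal at rate t (normalized so that t plus the ℓ1-norm of the price vector equals 1), a V-compliant fuel tax equilibrium exists for every t∈[0,1); moreover, for every prescribed total net CO2 emission level v∈[0,1] there exists a fuel tax equilibrium with total net CO2 emission v. -/
noncomputable section

/-- `V`-compliant fuel tax equilibrium (V = ℝ≤0³) at rate `t` on coal: the normalization
is `t + ‖p‖₁ = 1`; each firm maximizes `p·z + t·z₂` (it pays the tax on its coal
purchases); the agent's budget is endowment value plus firm profits (the tax nets out
with the rebate); and excess demand is ≤ 0 componentwise. -/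
def FuelEq (t : ℝ) (x y1 y2 p : ℝ × ℝ × ℝ) : Prop :=
  t + (|p.1| + |p.2.1| + |p.2.2|) = 1 ∧
  y1 ∈ Y1 ∧ (∀ z ∈ Y1, dot3 p z + t * z.2.1 ≤ dot3 p y1 + t * y1.2.1) ∧
  y2 ∈ Y2 ∧ (∀ z ∈ Y2, dot3 p z + t * z.2.1 ≤ dot3 p y2 + t * y2.2.1) ∧
  x ∈ X0 ∧
  dot3 p x ≤ dot3 p e0 + dot3 p y1 + dot3 p y2 ∧
  (∀ z ∈ X0, dot3 p z ≤ dot3 p e0 + dot3 p y1 + dot3 p y2 → z.2.2 ≤ x.2.2) ∧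
  x.1 - e0.1 - y1.1 - y2.1 ≤ 0 ∧
  x.2.1 - e0.2.1 - y1.2.1 - y2.2.1 ≤ 0 ∧
  x.2.2 - e0.2.2 - y1.2.2 - y2.2.2 ≤ 0

/-- a fuel tax equilibrium exists for every rate t ∈ [0,1), and every total
net CO2 emission level v ∈ [0,1] is attained at some fuel tax equilibrium. -/
theorem stmt14 :
    (∀ t ∈ Set.Ico (0:ℝ) 1, ∃ x y1 y2 p, FuelEq t x y1 y2 p) ∧
    (∀ v ∈ Set.Icc (0:ℝ) 1, ∃ t x y1 y2 p, 0 ≤ t ∧ t < 1 ∧ FuelEq t x y1 y2 p ∧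
      emiss x y1 y2 = v) := by

  constructor
  · rintro t ⟨ht0, ht1⟩
    rcases le_or_gt t (1/2) with hle | hgt
    · -- t ≤ 1/2 : nontrivial equilibrium
      refine ⟨(0,0,1), (1,-1,1), (0,0,0), (0, 1/2 - t, 1/2), ?_, ⟨1, by norm_num⟩,
        ?_, ⟨0, by norm_num⟩, ?_, ⟨rfl, by norm_num⟩, ?_, ?_, ?_, ?_, ?_⟩
      · simp only [abs_of_nonneg (by linarith : (0:ℝ) ≤ 1/2 - t),
          abs_of_nonneg (by norm_num : (0:ℝ) ≤ 1/2)]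
        norm_num
        ring
      · rintro z ⟨r, hr, rfl⟩
        simp only [dot3]; nlinarith
      · rintro z ⟨r, hr, rfl⟩
        simp only [dot3]; nlinarith
      · simp [dot3, e0]
      · rintro z ⟨hz1, hz2, hz3⟩ hb
        simp only [dot3, e0, hz1] at hb ⊢
        nlinarith
      all_goals simp [e0]
    · -- t > 1/2 : trivial equilibrium
      refine ⟨(0,0,0), (0,0,0), (0,0,0), (0, 0, 1 - t), ?_, ⟨0, by norm_num⟩,
        ?_, ⟨0, by norm_num⟩, ?_, ⟨rfl, le_refl 0, le_refl 0⟩, ?_, ?_, ?_, ?_, ?_⟩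
      · simp only [abs_of_nonneg (by linarith : (0:ℝ) ≤ 1 - t)]
        norm_num
      · rintro z ⟨r, hr, rfl⟩
        simp only [dot3]; nlinarith
      · rintro z ⟨r, hr, rfl⟩
        simp only [dot3]; nlinarith
      · simp [dot3, e0]
      · rintro z ⟨hz1, hz2, hz3⟩ hb
        simp only [dot3, e0, hz1] at hb ⊢
        nlinarith
      all_goals simp [e0]
  · rintro v ⟨hv0, hv1⟩
    refine ⟨1/2, (0,0,v), (v,-v,v), (0,0,0), (0, 0, 1/2), by norm_num, by norm_num,
      ⟨by norm_num [abs_of_nonneg], ⟨v, hv0, by norm_num⟩, ?_, ⟨0, by norm_num⟩, ?_,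
        ⟨rfl, le_refl 0, hv0⟩, ?_, ?_, ?_, ?_, ?_⟩, ?_⟩
    · rintro z ⟨r, hr, rfl⟩
      simp only [dot3]; nlinarith
    · rintro z ⟨r, hr, rfl⟩
      simp only [dot3]; nlinarith
    · simp [dot3, e0]
    · rintro z ⟨hz1, hz2, hz3⟩ hb
      simp only [dot3, e0, hz1] at hb ⊢
      nlinarith
    · simp [e0]; linarith
    · simp [e0]; linarith
    · simp [e0]
    · simp [emiss, e0]
end
end

section
/- In the one-agent linear-sequestration economy, for every total net CO2 emission level v∈[0,1], the agent's equilibrium electricity consumption at any fuel tax equilibrium with emission v is at most (1+v)/2, the electricity consumption at the emission tax equilibrium with emission v; the inequality is strict for v∈(0,1). Hence for v∈(0,1) every fuel tax equilibrium with emission v is Pareto dominated by the corresponding emission tax equilibrium. -/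
noncomputable section

/-!
Market clearing alone gives electricity consumption `x₃ ≤ r - s = (r + v)/2 ≤ (1 + v)/2`,
where `r ≤ 1` is the coal burnt and `s` the sequestration level. If nothing is sequestered,
`x₃ ≤ r = v < (1 + v)/2`. If sequestration is active, the two firms' first-order conditions,
non-satiation of the agent and the price normalization pin the prices down to
`p = (-1/4, 1/4 - t, 1/2)`, and the budget constraint then caps `x₃` at `1/2 < (1 + v)/2`.
-/

theorem eq_zero_of_forall_mul_le {r c : ℝ} (hr : 0 < r) (h : ∀ s, 0 ≤ s → s * c ≤ r * c) :
    c = 0 := by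
  have h0 := h 0 le_rfl
  have h2 := h (2 * r) (by positivity)
  exact (mul_eq_zero.mp (by linarith : r * c = 0)).resolve_left hr.ne'

theorem Y1.price_eq_of_isMax {p : ℝ × ℝ × ℝ} {t r : ℝ} (hr : 0 < r)
    (hmax : ∀ z ∈ Y1, dot3 p z + t * z.2.1 ≤ dot3 p (r, -r, r) + t * -r) :
    p.1 - p.2.1 + p.2.2 = t := by
  have := eq_zero_of_forall_mul_le (c := p.1 - p.2.1 + p.2.2 - t) hr fun s hs => by
    have := hmax (s, -s, s) ⟨s, hs, rfl⟩
    simp only [dot3] at this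
    linarith
  linarith

theorem Y2.price_eq_of_isMax {p : ℝ × ℝ × ℝ} {t s : ℝ} (hs : 0 < s)
    (hmax : ∀ z ∈ Y2, dot3 p z + t * z.2.1 ≤ dot3 p (-(2 * s), 0, -s) + t * 0) :
    p.2.2 = -(2 * p.1) := by
  have := eq_zero_of_forall_mul_le (c := -(2 * p.1) - p.2.2) hs fun s' hs' => by
    have := hmax (-(2 * s'), 0, -s') ⟨s', hs', rfl⟩
    simp only [dot3] at this
    linarith
  linarith

def IsDemand (p : ℝ × ℝ × ℝ) (w : ℝ) (x : ℝ × ℝ × ℝ) : Prop :=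
  x ∈ X0 ∧ dot3 p x ≤ w ∧ ∀ z ∈ X0, dot3 p z ≤ w → z.2.2 ≤ x.2.2

namespace IsDemand

variable {p x : ℝ × ℝ × ℝ} {w : ℝ}

theorem not_costless_improvement (h : IsDemand p w x) {a : ℝ} (ha : 0 ≤ x.2.1 + a)
    (hcost : p.2.1 * a + p.2.2 ≤ 0) : False := by
  obtain ⟨⟨hx1, -, hx3⟩, hbud, hopt⟩ := h
  have := hopt (0, x.2.1 + a, x.2.2 + 1) ⟨rfl, ha, by linarith⟩ <| by
    simp only [dot3] at hbud ⊢
    rw [hx1] at hbud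
    linarith
  linarith

theorem elec_price_pos (h : IsDemand p w x) : 0 < p.2.2 := by
  by_contra! hp
  exact h.not_costless_improvement (a := 0) (by simpa using h.1.2.1) (by simpa using hp)

theorem coal_price_nonneg (h : IsDemand p w x) : 0 ≤ p.2.1 := by
  by_contra! hp
  have hp3 := h.elec_price_pos
  refine h.not_costless_improvement (a := -p.2.2 / p.2.1) ?_ ?_
  · have := div_nonneg_of_nonpos (neg_nonpos.mpr hp3.le) hp.le
    linarith [h.1.2.1]
  · rw [mul_div_cancel₀ _ hp.ne]
    linarith

end IsDemand

namespace FuelEq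

variable {t r s : ℝ} {x p : ℝ × ℝ × ℝ}

theorem isDemand (h : FuelEq t x (r, -r, r) (-(2 * s), 0, -s) p) :
    IsDemand p (dot3 p e0 + dot3 p (r, -r, r) + dot3 p (-(2 * s), 0, -s)) x :=
  ⟨h.2.2.2.2.2.1, h.2.2.2.2.2.2.1, h.2.2.2.2.2.2.2.1⟩

theorem emiss_eq (h : FuelEq t x (r, -r, r) (-(2 * s), 0, -s) p) :
    emiss x (r, -r, r) (-(2 * s), 0, -s) = r - 2 * s := by
  simp only [emiss, e0, h.isDemand.1.1]
  ring

theorem elec_le_and_le_one (h : FuelEq t x (r, -r, r) (-(2 * s), 0, -s) p) :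
    x.2.2 ≤ r - s ∧ r ≤ 1 := by
  obtain ⟨-, -, -, -, -, ⟨-, hx2, -⟩, -, -, -, hcl2, hcl3⟩ := h
  simp only [e0] at hcl2 hcl3
  constructor <;> linarith

theorem elec_le_half (h : FuelEq t x (r, -r, r) (-(2 * s), 0, -s) p) (ht : 0 ≤ t)
    (hr : 0 < r) (hs : 0 < s) : x.2.2 ≤ 1 / 2 := by
  have hdem := h.isDemand
  have hp2 := hdem.coal_price_nonneg
  have hp3 := hdem.elec_price_pos
  have hfoc1 := Y1.price_eq_of_isMax hr h.2.2.1
  have hfoc2 := Y2.price_eq_of_isMax hs h.2.2.2.2.1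
  have hnorm := h.1
  rw [abs_of_neg (by linarith), abs_of_nonneg hp2, abs_of_pos hp3] at hnorm
  have hbud : p.2.1 * x.2.1 + p.2.2 * x.2.2 ≤ p.2.1 + r * t := by
    have := hdem.2.1
    simp only [dot3, e0, hdem.1.1] at this
    linear_combination this + r * hfoc1 - s * hfoc2
  have hr1 := h.elec_le_and_le_one.2
  rw [show p.2.2 = 1 / 2 by linarith] at hbud
  linarith [mul_nonneg hp2 hdem.1.2.1, mul_nonneg ht (by linarith : (0:ℝ) ≤ 1 - r)]

end FuelEq

theorem stmt15_general (v : ℝ) (t : ℝ) (ht : 0 ≤ t)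
    (x y1 y2 p : ℝ × ℝ × ℝ) (heq : FuelEq t x y1 y2 p) (hemi : emiss x y1 y2 = v) :
    x.2.2 ≤ (1+v)/2 ∧
    (v ∈ Set.Ioo (0:ℝ) 1 → x.2.2 < (1+v)/2) ∧
    (v ∈ Set.Ioo (0:ℝ) 1 → x.2.2 - v^2/2 < (1+v)/2 - v^2/2) := by
  obtain ⟨r, hr, rfl⟩ := heq.2.1
  obtain ⟨s, hs, rfl⟩ := heq.2.2.2.1
  rw [heq.emiss_eq] at hemi
  obtain ⟨hx3, hr1⟩ := heq.elec_le_and_le_one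
  have hstrict : v ∈ Set.Ioo (0:ℝ) 1 → x.2.2 < (1+v)/2 := by
    rintro ⟨hv0, hv1⟩
    rcases hs.eq_or_lt with rfl | hs
    · linarith
    · linarith [heq.elec_le_half ht (by linarith) hs]
  exact ⟨by linarith, hstrict, fun hv => by linarith [hstrict hv]⟩

/-- at any fuel tax equilibrium with total net CO2 emission v ∈ [0,1] the
agent's electricity consumption is at most (1+v)/2 — her consumption at the emission tax
equilibrium with emission v — with strict inequality (hence strictly lower utility
c₃ − v²/2, i.e. Pareto domination by the emission tax equilibrium) for v ∈ (0,1). -/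
theorem stmt15 (v : ℝ) (hv : v ∈ Set.Icc (0:ℝ) 1) (t : ℝ) (ht : 0 ≤ t)
    (x y1 y2 p : ℝ × ℝ × ℝ) (heq : FuelEq t x y1 y2 p) (hemi : emiss x y1 y2 = v) :
    x.2.2 ≤ (1+v)/2 ∧
    (v ∈ Set.Ioo (0:ℝ) 1 → x.2.2 < (1+v)/2) ∧
    (v ∈ Set.Ioo (0:ℝ) 1 → x.2.2 - v^2/2 < (1+v)/2 - v^2/2) :=
  stmt15_general v t ht x y1 y2 p heq hemi
end
end

section
/- In the two-agent, one-firm economy with fuel tax on coal—three commodities CO2, coal, electricity; agents with consumption set {0}×R≥0², endowments (0,1,0), utilities c3−v²/2 and c2+c3−v²/2 respectively; single firm Y1={(r,−r,r): r≥0}; equal shareholdings and equal rebate shares; compliance region V=R≤0³—no fuel tax equilibrium exists when the fuel tax rate t exceeds 1/2. -/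
noncomputable section

/-- Fuel tax equilibrium of the two-agent, one-firm economy: both agents have endowment
(0,1,0) and share 1/2 of the firm and of the tax rebate; agent 1 maximizes c₃ − v²/2 and
agent 2 maximizes c₂ + c₃ − v²/2 (the externality v being fixed at equilibrium, they
maximize c₃, resp. c₂ + c₃); each wealth is the endowment value plus half the firm's
pre-tax profit (the tax nets out against the rebate). -/
def FuelEq2 (t : ℝ) (x1 x2 y p : ℝ × ℝ × ℝ) : Prop :=
  t + (|p.1| + |p.2.1| + |p.2.2|) = 1 ∧
  y ∈ Y1 ∧ (∀ z ∈ Y1, dot3 p z + t * z.2.1 ≤ dot3 p y + t * y.2.1) ∧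
  x1 ∈ X0 ∧ x2 ∈ X0 ∧
  dot3 p x1 ≤ dot3 p e0 + (1/2) * dot3 p y ∧
  dot3 p x2 ≤ dot3 p e0 + (1/2) * dot3 p y ∧
  (∀ z ∈ X0, dot3 p z ≤ dot3 p e0 + (1/2) * dot3 p y → z.2.2 ≤ x1.2.2) ∧
  (∀ z ∈ X0, dot3 p z ≤ dot3 p e0 + (1/2) * dot3 p y → z.2.1 + z.2.2 ≤ x2.2.1 + x2.2.2) ∧
  x1.1 + x2.1 - 2*e0.1 - y.1 ≤ 0 ∧
  x1.2.1 + x2.2.1 - 2*e0.2.1 - y.2.1 ≤ 0 ∧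
  x1.2.2 + x2.2.2 - 2*e0.2.2 - y.2.2 ≤ 0

/-- no fuel tax equilibrium exists when the fuel tax rate exceeds 1/2. -/
theorem stmt16 (t : ℝ) (ht : 1/2 < t) :
    ¬ ∃ x1 x2 y p, FuelEq2 t x1 x2 y p := by
  rintro ⟨⟨a1, b1, c1⟩, ⟨a2, b2, c2⟩, y, ⟨p1, p2, p3⟩,
    hnorm, ⟨r, hr, rfl⟩, hopt, hx1, hx2, hb1, hb2, hmax1, hmax2, hm1, hm2, hm3⟩
  obtain ⟨ha1, hb1', hc1'⟩ := hx1
  obtain ⟨ha2, hb2', hc2'⟩ := hx2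
  -- Step 1: the firm produces 0
  have h0 := hopt (0, 0, 0) ⟨0, le_rfl, by norm_num⟩
  simp only [dot3] at h0
  have hneg : p1 - p2 + p3 - t < 0 := by
    have h1 := le_abs_self p1
    have h2 := neg_abs_le p2
    have h3 := le_abs_self p3
    linarith
  have hr0 : r = 0 := by
    have hrle : r ≤ 0 := by nlinarith
    linarith
  subst hr0
  simp only [dot3, e0, neg_zero, mul_zero, add_zero, zero_add, mul_one, mul_zero] at hb1 hb2 hm1 hm2 hm3
  -- Step 2: p2 > 0
  have hp2 : 0 < p2 := by
    by_contra h
    push_neg at h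
    have hbud : dot3 (p1, p2, p3) (0, b2 + c2 + 1, 0) ≤
        dot3 (p1, p2, p3) e0 + 1/2 * dot3 (p1, p2, p3) (0, -0, 0) := by
      simp only [dot3, e0]
      nlinarith
    have := hmax2 (0, b2 + c2 + 1, 0) ⟨rfl, by simp; linarith, le_rfl⟩ hbud
    simp at this
    linarith
  -- Step 3: p3 > 0
  have hp3 : 0 < p3 := by
    by_contra h
    push_neg at h
    have hbud : dot3 (p1, p2, p3) (0, 0, b2 + c2 + 1) ≤
        dot3 (p1, p2, p3) e0 + 1/2 * dot3 (p1, p2, p3) (0, -0, 0) := by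
      simp only [dot3, e0]
      nlinarith
    have := hmax2 (0, 0, b2 + c2 + 1) ⟨rfl, le_rfl, by simp; linarith⟩ hbud
    simp at this
    linarith
  -- Step 4: agent 1 consumes no electricity
  have hc10 : c1 = 0 := by

    linarith
  -- Step 5: but agent 1 can afford positive electricity
  have hbud : dot3 (p1, p2, p3) (0, 0, p2 / p3) ≤
      dot3 (p1, p2, p3) e0 + 1/2 * dot3 (p1, p2, p3) (0, -0, 0) := by
    simp only [dot3, e0]
    rw [mul_div_cancel₀ _ (ne_of_gt hp3)]
    ring_nf
    norm_num
  have hle := hmax1 (0, 0, p2 / p3) ⟨rfl, le_rfl, le_of_lt (div_pos hp2 hp3)⟩ hbud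
  have : (0:ℝ) < p2 / p3 := div_pos hp2 hp3
  simp only at hle
  linarith
end
end

section
/- In the one-agent linear-sequestration economy with quota regulation (compliance region Z(m)={m}×R≤0×R≤0), for every m∈[−1,0] a Z(m)-compliant quota equilibrium exists, and at every such equilibrium the total net CO2 emission equals −m; moreover the equilibrium consumption-production pair for m=−1/2, namely x=(0,0,3/4), y=((1,−1,1),(−1/2,0,−1/4)) with price (−1/4,1/4,1/2), is the unique quota equilibrium for m=−1/2 and is full Pareto optimal among all quota-compliant pairs for all quotas m∈[−1,0]. -/
noncomputable section

/-- `Z(m)`-compliant quota equilibrium of the one-agent economy with firms `Y1`, `Y2`,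
compliance region Z(m) = {m} × ℝ≤0 × ℝ≤0, the single agent owning all firms and all
quota revenue `p₁·m`. -/
def QEq1 (m : ℝ) (x y1 y2 p : ℝ × ℝ × ℝ) : Prop :=
  |p.1| + |p.2.1| + |p.2.2| = 1 ∧
  y1 ∈ Y1 ∧ (∀ z ∈ Y1, dot3 p z ≤ dot3 p y1) ∧
  y2 ∈ Y2 ∧ (∀ z ∈ Y2, dot3 p z ≤ dot3 p y2) ∧
  x ∈ X0 ∧
  dot3 p x ≤ dot3 p e0 + dot3 p y1 + dot3 p y2 + p.1 * m ∧
  (∀ z ∈ X0, dot3 p z ≤ dot3 p e0 + dot3 p y1 + dot3 p y2 + p.1 * m → z.2.2 ≤ x.2.2) ∧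
  x.1 - e0.1 - y1.1 - y2.1 = m ∧
  x.2.1 - e0.2.1 - y1.2.1 - y2.2.1 ≤ 0 ∧
  x.2.2 - e0.2.2 - y1.2.2 - y2.2.2 ≤ 0

/-!
Both firms have constant returns to scale, so at any equilibrium price they make zero profit and
the agent's wealth is `p₂ + p₁ m`; optimal demand forces `p₃ > 0` and spends all of it on
electricity. For `m = -1/2` the compliance constraints give electricity at most `3/4`; on the
other hand the power plant must run, so `p₂ = p₁ + p₃`, and the sequestration bound
`p₁ ≥ -p₃/2` then makes the wealth at least `3 p₃/4`, i.e. electricity at least `3/4`.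
Equality pins down every quantity and, with the normalization, the price. Optimality is the
bound `x₃ ≤ (1 - m)/2` coming from the coal and CO2 constraints.
-/

theorem dot3_smul (p z : ℝ × ℝ × ℝ) (r : ℝ) : dot3 p (r • z) = r * dot3 p z := by
  simp only [dot3, Prod.smul_fst, Prod.smul_snd, smul_eq_mul]
  ring

def ray (d : ℝ × ℝ × ℝ) : Set (ℝ × ℝ × ℝ) := {y | ∃ r : ℝ, 0 ≤ r ∧ y = r • d}

theorem Y1_eq_ray : Y1 = ray (1, -1, 1) := by
  ext y
  simp [Y1, ray]

theorem Y2_eq_ray : Y2 = ray (-2, 0, -1) := by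
  ext y
  simp [Y2, ray, mul_comm]

def IsProfitMax (Y : Set (ℝ × ℝ × ℝ)) (p y : ℝ × ℝ × ℝ) : Prop :=
  y ∈ Y ∧ ∀ z ∈ Y, dot3 p z ≤ dot3 p y

theorem forall_nonneg_mul_le_mul_iff {a r : ℝ} (hr : 0 ≤ r) :
    (∀ t : ℝ, 0 ≤ t → t * a ≤ r * a) ↔ a ≤ 0 ∧ r * a = 0 := by
  constructor
  · intro h
    have ha : a ≤ 0 := by nlinarith [h (r + 1) (by linarith)]
    exact ⟨ha, le_antisymm (mul_nonpos_of_nonneg_of_nonpos hr ha) (by simpa using h 0 le_rfl)⟩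
  · rintro ⟨ha, hra⟩ t ht
    rw [hra]
    exact mul_nonpos_of_nonneg_of_nonpos ht ha

theorem isProfitMax_ray_iff {d p y : ℝ × ℝ × ℝ} :
    IsProfitMax (ray d) p y ↔ y ∈ ray d ∧ dot3 p d ≤ 0 ∧ dot3 p y = 0 := by
  constructor
  · rintro ⟨⟨r, hr, rfl⟩, hmax⟩
    have := (forall_nonneg_mul_le_mul_iff hr).1 fun t ht => by
      simpa only [dot3_smul] using hmax (t • d) ⟨t, ht, rfl⟩
    exact ⟨⟨r, hr, rfl⟩, this.1, by rw [dot3_smul, this.2]⟩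
  · rintro ⟨⟨r, hr, rfl⟩, hd, hy⟩
    refine ⟨⟨r, hr, rfl⟩, ?_⟩
    rintro _ ⟨t, ht, rfl⟩
    simp only [dot3_smul] at hy ⊢
    exact (forall_nonneg_mul_le_mul_iff hr).2 ⟨hd, hy⟩ t ht

section IsDemand

variable {p x : ℝ × ℝ × ℝ} {w : ℝ}

theorem IsDemand.price_pos (h : IsDemand p w x) : 0 < p.2.2 := by
  obtain ⟨⟨hx1, hx2, hx3⟩, hbud, hopt⟩ := h
  by_contra! hp3
  have := hopt (0, x.2.1, x.2.2 + 1) ⟨rfl, hx2, by linarith⟩ (by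
    simp only [dot3, hx1] at hbud ⊢
    linarith)
  linarith

theorem IsDemand.price_nonneg (h : IsDemand p w x) : 0 ≤ p.2.1 := by
  have hp3 := h.price_pos
  obtain ⟨⟨hx1, hx2, hx3⟩, hbud, hopt⟩ := h
  by_contra! hp2
  -- buy more coal, whose negative price pays for one more unit of electricity
  have hT : 0 ≤ x.2.1 - p.2.2 / p.2.1 := by
    have : p.2.2 / p.2.1 ≤ 0 := div_nonpos_of_nonneg_of_nonpos hp3.le hp2.le
    linarith
  have := hopt (0, x.2.1 - p.2.2 / p.2.1, x.2.2 + 1) ⟨rfl, hT, by linarith⟩ (by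
    simp only [dot3, hx1] at hbud ⊢
    rw [mul_sub, mul_div_cancel₀ _ hp2.ne]
    linarith)
  linarith

theorem isDemand_iff :
    IsDemand p w x ↔
      x ∈ X0 ∧ 0 ≤ p.2.1 ∧ 0 < p.2.2 ∧ p.2.1 * x.2.1 = 0 ∧ p.2.2 * x.2.2 = w := by
  constructor
  · intro h
    have hp2 := h.price_nonneg
    have hp3 := h.price_pos
    obtain ⟨⟨hx1, hx2, hx3⟩, hbud, hopt⟩ := h
    simp only [dot3, hx1, mul_zero, zero_add] at hbud hopt
    have hcoal : 0 ≤ p.2.1 * x.2.1 := mul_nonneg hp2 hx2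
    have hspend : w ≤ p.2.2 * x.2.2 := by
      have := hopt (0, 0, w / p.2.2) ⟨rfl, le_rfl, div_nonneg (by nlinarith) hp3.le⟩ (by
        simp only [mul_zero, zero_add]
        rw [mul_div_cancel₀ _ hp3.ne'])
      rwa [div_le_iff₀ hp3, mul_comm] at this
    refine ⟨⟨hx1, hx2, hx3⟩, hp2, hp3, ?_, ?_⟩ <;> nlinarith
  · rintro ⟨⟨hx1, hx2, hx3⟩, hp2, hp3, hcoal, hspend⟩
    refine ⟨⟨hx1, hx2, hx3⟩, by simp [dot3, hx1, hcoal, hspend], ?_⟩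
    rintro z ⟨hz1, hz2, hz3⟩ hz
    simp only [dot3, hz1, mul_zero, zero_add] at hz
    nlinarith [mul_nonneg hp2 hz2]

end IsDemand

def IsCompliant (m : ℝ) (x y1 y2 : ℝ × ℝ × ℝ) : Prop :=
  x.1 - e0.1 - y1.1 - y2.1 = m ∧
  x.2.1 - e0.2.1 - y1.2.1 - y2.2.1 ≤ 0 ∧
  x.2.2 - e0.2.2 - y1.2.2 - y2.2.2 ≤ 0

theorem IsCompliant.emiss_eq {m : ℝ} {x y1 y2 : ℝ × ℝ × ℝ} (h : IsCompliant m x y1 y2) :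
    emiss x y1 y2 = -m := by
  rw [emiss, ← h.1]
  ring

theorem IsCompliant.elec_le {m : ℝ} {x y1 y2 : ℝ × ℝ × ℝ} (h : IsCompliant m x y1 y2)
    (hx : x ∈ X0) (hy1 : y1 ∈ Y1) (hy2 : y2 ∈ Y2) : x.2.2 ≤ (1 - m) / 2 := by
  obtain ⟨hx1, hx2, -⟩ := hx
  obtain ⟨r, -, rfl⟩ := hy1
  obtain ⟨s, -, rfl⟩ := hy2
  obtain ⟨hq, hcoal, hco2⟩ := h
  simp only [e0, hx1] at hq hcoal hco2
  linarith

theorem qEq1_iff {m : ℝ} {x y1 y2 p : ℝ × ℝ × ℝ} :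
    QEq1 m x y1 y2 p ↔
      |p.1| + |p.2.1| + |p.2.2| = 1 ∧ IsProfitMax Y1 p y1 ∧ IsProfitMax Y2 p y2 ∧
        IsDemand p (dot3 p e0 + dot3 p y1 + dot3 p y2 + p.1 * m) x ∧
        IsCompliant m x y1 y2 := by
  simp only [QEq1, IsProfitMax, IsDemand, IsCompliant, and_assoc]

theorem qEq1_of_abs_le_one {m : ℝ} (hm : |m| ≤ 1) :
    QEq1 m (0, 0, (1 - m) / 2) (1, -1, 1) (-(1 + m), 0, -((1 + m) / 2))
      (-(1 / 4), 1 / 4, 1 / 2) := by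
  obtain ⟨hm₁, hm₂⟩ := abs_le.1 hm
  rw [qEq1_iff, Y1_eq_ray, Y2_eq_ray, isProfitMax_ray_iff, isProfitMax_ray_iff, isDemand_iff]
  refine ⟨by norm_num [abs_of_pos], ⟨⟨1, zero_le_one, by simp⟩, ?_⟩,
    ⟨⟨(1 + m) / 2, by linarith, ?_⟩, ?_⟩, ⟨⟨rfl, le_rfl, by linarith⟩, ?_⟩, ?_⟩
  all_goals
    simp only [dot3, IsCompliant, e0, Prod.ext_iff, Prod.smul_mk, smul_eq_mul]
    norm_num
  all_goals linarith

theorem QEq1.eq_of_quota_half {x y1 y2 p : ℝ × ℝ × ℝ} (h : QEq1 (-(1 / 2)) x y1 y2 p) :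
    x = (0, 0, 3 / 4) ∧ y1 = (1, -1, 1) ∧ y2 = (-(1 / 2), 0, -(1 / 4)) ∧
      p = (-(1 / 4), 1 / 4, 1 / 2) := by
  rw [qEq1_iff, Y1_eq_ray, Y2_eq_ray, isProfitMax_ray_iff, isProfitMax_ray_iff,
    isDemand_iff] at h
  obtain ⟨hnorm, ⟨⟨r, hr, rfl⟩, hA, hπ1⟩, ⟨⟨s, hs, rfl⟩, hB, hπ2⟩,
    ⟨⟨hx1, hx2, hx3⟩, hp2, hp3, hcoal, hspend⟩, hq, hcoalq, hco2q⟩ := h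
  obtain ⟨p1, p2, p3⟩ := p
  obtain ⟨c1, c2, c3⟩ := x
  simp only [dot3, e0, Prod.smul_mk, smul_eq_mul, mul_one, mul_neg, mul_zero, add_zero,
    sub_zero] at *
  subst hx1
  rw [hπ1, hπ2] at hspend
  have hp2pos : 0 < p2 := by linarith
  have hc2 : c2 = 0 := by simpa [hp2pos.ne'] using hcoal
  have hA0 : p1 - p2 + p3 = 0 := by nlinarith
  have hc3 : 3 / 4 ≤ c3 := by nlinarith
  have hs' : s = 1 / 4 := by linarith
  have hp1 : p1 = -(p3 / 2) := by nlinarith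
  have hp3' : p3 = 1 / 2 := by
    rw [hp1, show p2 = p3 / 2 by linarith, abs_neg, abs_of_pos hp3,
      abs_of_pos (half_pos hp3)] at hnorm
    linarith
  have hr' : r = 1 := by linarith
  have hc3' : c3 = 3 / 4 := by linarith
  have hp2' : p2 = 1 / 4 := by linarith
  subst_vars
  norm_num

/-- for every m ∈ [−1,0] a quota equilibrium exists and its total net CO2
emission equals −m; the displayed triple is the unique quota equilibrium for m = −1/2;
and its consumption-production pair is full Pareto optimal among all quota-compliant
pairs for all quotas m ∈ [−1,0] (its utility 3/4 − (1/2)²/2 is maximal). -/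
theorem stmt19 :
    (∀ m ∈ Set.Icc (-1:ℝ) 0, ∃ x y1 y2 p, QEq1 m x y1 y2 p) ∧
    (∀ m ∈ Set.Icc (-1:ℝ) 0, ∀ x y1 y2 p, QEq1 m x y1 y2 p → emiss x y1 y2 = -m) ∧
    (∀ x y1 y2 p, QEq1 (-(1/2)) x y1 y2 p ↔
      (x = (0, 0, 3/4) ∧ y1 = (1, -1, 1) ∧ y2 = (-(1/2), 0, -(1/4)) ∧
        p = (-(1/4), 1/4, 1/2))) ∧
    (∀ m ∈ Set.Icc (-1:ℝ) 0, ∀ x y1 y2 : ℝ × ℝ × ℝ,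
      x ∈ X0 → y1 ∈ Y1 → y2 ∈ Y2 →
      x.1 - e0.1 - y1.1 - y2.1 = m →
      x.2.1 - e0.2.1 - y1.2.1 - y2.2.1 ≤ 0 →
      x.2.2 - e0.2.2 - y1.2.2 - y2.2.2 ≤ 0 →
      x.2.2 - (-m)^2/2 ≤ 3/4 - (1/2:ℝ)^2/2) := by
  refine ⟨?_, ?_, ?_, ?_⟩
  · rintro m ⟨hm₁, hm₀⟩
    exact ⟨_, _, _, _, qEq1_of_abs_le_one (abs_le.2 ⟨hm₁, by linarith⟩)⟩
  · rintro m - x y1 y2 p h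
    exact (qEq1_iff.1 h).2.2.2.2.emiss_eq
  · refine fun x y1 y2 p => ⟨QEq1.eq_of_quota_half, ?_⟩
    rintro ⟨rfl, rfl, rfl, rfl⟩
    convert qEq1_of_abs_le_one (m := -(1 / 2)) (by norm_num [abs_of_pos]) using 2 <;> norm_num
  · rintro m - x y1 y2 hx hy1 hy2 hq hcoal hco2
    have := IsCompliant.elec_le ⟨hq, hcoal, hco2⟩ hx hy1 hy2
    nlinarith [sq_nonneg (m + 1 / 2)]
end
end
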